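/- arXiv:1909.03021 — 3 statements merged into one kernel-verified Lean document; each statement's English description precedes it below -/
import Mathlib

section
/- Let G be a finite connected graph, q ≥ 1, and κ ∈ {1,q}^E with κ_f = κ_g = 1 for two distinct edges f, g. Writing κ^{±±} for the configurations where f and g are set to q or 1 respectively, one has det Δ_{κ^{++}} · det Δ_{κ^{--}} ≤ det Δ_{κ^{+-}} · det Δ_{κ^{-+}}. -/
open scoped Classical

/-- The set of (edge sets of) spanning trees of a finite graph `G`. -/
noncomputable def spanningTrees {V : Type*} [Fintype V] [DecidableEq V]
    (G : SimpleGraph V) : Finset (Finset (Sym2 V)) :=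
  Finset.univ.filter fun t =>
    ↑t ⊆ G.edgeSet ∧ (SimpleGraph.fromEdgeSet (↑t : Set (Sym2 V))).Connected ∧
      t.card = Fintype.card V - 1

/-- The determinant of the weighted graph Laplacian on mean-zero functions, via
Kirchhoff's formula `det Δ_κ = |V| ⬝ ∑_{t ∈ ST(G)} ∏_{e ∈ t} κ_e`. -/
noncomputable def detLap {V : Type*} [Fintype V] [DecidableEq V]
    (G : SimpleGraph V) (κ : Sym2 V → ℝ) : ℝ :=
  (Fintype.card V : ℝ) * ∑ t ∈ spanningTrees G, ∏ e ∈ t, κ e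

/-!
By Kirchhoff's theorem the spanning-tree sum `∑_t ∏_{e ∈ t} κ e` is the determinant of the
reduced Laplacian `L_κ = ∑_e κ e • b_e b_eᵀ`, where `b_e` is the signed incidence vector of
`e` with the coordinate of a root vertex deleted: by Cauchy–Binet it is a sum over
`(|V|-1)`-sets of edges weighted by squared incidence minors, which are `1` on spanning trees
(the minor is an invertible integer matrix) and `0` otherwise (the indicator of a component
missing the root is in its kernel). Raising `κ f` and `κ g` from `1` to `q` is thus the rank-two
update `L + s P_f + s P_g` with `P_e = b_e b_eᵀ` and `s = q - 1`, and the matrix determinant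
lemma gives, for invertible `L`,
`det (L + s P_f + s P_g) * det L`
`  = det (L + s P_f) * det (L + s P_g) - (s * det L * b_fᵀ L⁻¹ b_g)²`,
the negative correlation of the events `f ∈ t` and `g ∈ t`. For singular `L` the left side
vanishes.
-/

open Matrix Finset Function SimpleGraph

section RankTwo
variable {n R : Type*} [Fintype n]

theorem dotProduct_mulVec_comm_of_isSymm [CommRing R] {A : Matrix n n R} (hA : A.IsSymm)
    (u v : n → R) : v ⬝ᵥ A *ᵥ u = u ⬝ᵥ A *ᵥ v := by
  rw [dotProduct_mulVec, ← mulVec_transpose, hA.eq, dotProduct_comm]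

variable [DecidableEq n]

theorem det_add_smul_vecMulVec_add_smul_vecMulVec [CommRing R] {A : Matrix n n R}
    (hA : A.IsSymm) (hdet : IsUnit A.det) (u v : n → R) (a b : R) :
    det (A + a • vecMulVec u u + b • vecMulVec v v) =
      det A * ((1 + a * (u ⬝ᵥ A⁻¹ *ᵥ u)) * (1 + b * (v ⬝ᵥ A⁻¹ *ᵥ v)) -
        a * b * (u ⬝ᵥ A⁻¹ *ᵥ v) ^ 2) := by
  have hUW : a • vecMulVec u u + b • vecMulVec v v =
      (of fun i => ![u i, v i]) * of ![a • u, b • v] := by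
    ext i j
    simp only [Matrix.add_apply, Matrix.smul_apply, vecMulVec_apply, mul_apply, of_apply,
      Fin.sum_univ_two, cons_val_zero, cons_val_one, Pi.smul_apply, smul_eq_mul]
    ring
  have hsmall : 1 + of ![a • u, b • v] * (A⁻¹ * of fun i => ![u i, v i]) =
      !![1 + a * (u ⬝ᵥ A⁻¹ *ᵥ u), a * (u ⬝ᵥ A⁻¹ *ᵥ v);
        b * (v ⬝ᵥ A⁻¹ *ᵥ u), 1 + b * (v ⬝ᵥ A⁻¹ *ᵥ v)] := by
    ext k l
    fin_cases k <;> fin_cases l <;>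
      simp [mul_apply, vecMul, dotProduct, mulVec, Finset.mul_sum, mul_assoc]
  rw [add_assoc, hUW, det_add_mul _ _ hdet, Matrix.mul_assoc, hsmall,
    dotProduct_mulVec_comm_of_isSymm hA.inv u v, det_fin_two_of]
  ring

theorem det_add_two_vecMulVec_mul_det_le {K : Type*} [Field K] [LinearOrder K]
    [IsStrictOrderedRing K] {A : Matrix n n K} (hA : A.IsSymm) (hdet : A.det ≠ 0)
    (u v : n → K) (s : K) :
    det (A + s • vecMulVec u u + s • vecMulVec v v) * det A ≤
      det (A + s • vecMulVec u u) * det (A + s • vecMulVec v v) := by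
  have key := det_add_smul_vecMulVec_add_smul_vecMulVec hA hdet.isUnit u v
  have hu := key s 0
  have hv := key 0 s
  simp only [zero_smul, add_zero, zero_mul, mul_one, one_mul, sub_zero] at hu hv
  rw [key, hu, hv]
  linear_combination sq_nonneg (det A * s * (u ⬝ᵥ A⁻¹ *ᵥ v))

end RankTwo

section CauchyBinet
variable {n ι R : Type*} [Fintype n] [DecidableEq n] [CommRing R]

theorem det_sum_smul_vecMulVec_eq_sum_piFinset (E : Finset ι) (x : ι → R) (b : ι → n → R) :
    det (∑ e ∈ E, x e • vecMulVec (b e) (b e)) =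
      ∑ c ∈ Fintype.piFinset fun _ : n => E,
        (∏ i, x (c i) * b (c i) i) * det (of fun i => b (c i)) := by
  have hrows : ∑ e ∈ E, x e • vecMulVec (b e) (b e) =
      of fun i => ∑ e ∈ E, (x e * b e i) • b e := by
    ext i j
    simp [Matrix.sum_apply, vecMulVec_apply, mul_assoc]
  rw [hrows]
  change detRowAlternating (fun i => ∑ e ∈ E, (x e * b e i) • b e) = _
  rw [← AlternatingMap.coe_multilinearMap, MultilinearMap.map_sum_finset]
  refine sum_congr rfl fun c _ => ?_
  rw [MultilinearMap.map_smul_univ, smul_eq_mul]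
  rfl

theorem sum_perm_prod_mul_det (S : Finset ι) (σ : n ≃ S) (x : ι → R) (b : ι → n → R) :
    ∑ π : Equiv.Perm n,
        (∏ i, x (σ (π i)) * b (σ (π i)) i) * det (of fun i => b (σ (π i))) =
      (∏ e ∈ S, x e) * det (of fun i => b (σ i)) ^ 2 := by
  set B : Matrix n n R := of fun i => b (σ i)
  have hterm (π : Equiv.Perm n) :
      (∏ i, x (σ (π i)) * b (σ (π i)) i) * det (of fun i => b (σ (π i))) =
        (∏ e ∈ S, x e) * det B * (Equiv.Perm.sign π * ∏ i, B (π i) i) := by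
    have hx : ∏ i, x (σ (π i)) = ∏ e ∈ S, x e := by
      rw [← prod_coe_sort S x]
      exact Equiv.prod_comp (π.trans σ) fun e : S => x e
    have hrows : (of fun i => b (σ (π i))) = B.submatrix π id := rfl
    rw [prod_mul_distrib, hx, hrows, det_permute]
    simp only [B, of_apply]
    ring
  rw [sum_congr rfl fun π _ => hterm π, ← mul_sum, ← det_apply']
  ring

variable [DecidableEq ι]

theorem sum_filter_image_eq_sum_perm {M : Type*} [AddCommMonoid M] {E S : Finset ι} (hS : S ⊆ E)
    (σ : n ≃ S) (F : (n → ι) → M) :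
    ∑ c ∈ Fintype.piFinset (fun _ : n => E) with Injective c ∧ univ.image c = S, F c =
      ∑ π : Equiv.Perm n, F fun i => σ (π i) := by
  have hinj : Injective fun (π : Equiv.Perm n) (i : n) => (σ (π i) : ι) := fun π π' h =>
    Equiv.ext fun i => σ.injective (Subtype.ext (congrFun h i))
  rw [← sum_image fun π _ π' _ h => hinj h]
  congr 1
  ext c
  simp only [mem_filter, Fintype.mem_piFinset, mem_image, mem_univ, true_and]
  constructor
  · rintro ⟨-, hc, rfl⟩
    have hcS : ∀ i, c i ∈ univ.image c := fun i => mem_image_of_mem c (mem_univ i)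
    refine ⟨Equiv.ofBijective (fun i => σ.symm ⟨c i, hcS i⟩)
      (Finite.injective_iff_bijective.mp ?_), ?_⟩
    · exact fun i j h => hc (congrArg Subtype.val (σ.symm.injective h))
    · funext i
      simp
  · rintro ⟨π, rfl⟩
    refine ⟨fun i => hS (σ (π i)).2,
      Subtype.val_injective.comp (σ.injective.comp π.injective), ?_⟩
    ext e
    simp only [mem_image, mem_univ, true_and]
    exact ⟨fun ⟨i, hi⟩ => hi ▸ (σ (π i)).2,
      fun he => ⟨π.symm (σ.symm ⟨e, he⟩), by simp⟩⟩

theorem det_sum_smul_vecMulVec_eq_sum_powersetCard (E : Finset ι) (x : ι → R)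
    (b : ι → n → R) (w : Finset ι → R)
    (hw : ∀ S ∈ E.powersetCard (Fintype.card n), ∀ σ : n ≃ S,
      det (of fun i => b (σ i)) ^ 2 = w S) :
    det (∑ e ∈ E, x e • vecMulVec (b e) (b e)) =
      ∑ S ∈ E.powersetCard (Fintype.card n), (∏ e ∈ S, x e) * w S := by
  rw [det_sum_smul_vecMulVec_eq_sum_piFinset, ← sum_filter_of_ne (p := Injective) ?noninj,
    ← sum_fiberwise_of_maps_to (g := fun c => univ.image c)
    (t := E.powersetCard (Fintype.card n)) ?image]
  case noninj =>
    intro c _ hc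
    by_contra hnot
    obtain ⟨i, j, hij, hne⟩ := not_injective_iff.mp hnot
    exact hc (by rw [det_zero_of_row_eq hne (congrArg b hij), mul_zero])
  case image =>
    intro c hc
    obtain ⟨hcE, hc⟩ := mem_filter.mp hc
    refine mem_powersetCard.mpr
      ⟨fun e he => ?_, by rw [card_image_of_injective _ hc, card_univ]⟩
    obtain ⟨i, -, rfl⟩ := mem_image.mp he
    exact Fintype.mem_piFinset.mp hcE i
  refine sum_congr rfl fun S hS => ?_
  obtain ⟨hSE, hcard⟩ := mem_powersetCard.mp hS
  let σ : n ≃ S := Fintype.equivOfCardEq (by rw [Fintype.card_coe, hcard])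
  rw [filter_filter, sum_filter_image_eq_sum_perm hSE σ, sum_perm_prod_mul_det, hw S hS σ]

end CauchyBinet

namespace MatrixTree

theorem mk_out {V : Type*} (e : Sym2 V) : s(e.out.1, e.out.2) = e :=
  Quot.out_eq e

variable {V R : Type*} [DecidableEq V]

def vertexVec (R : Type*) [Zero R] [One R] (r a : V) : {v // v ≠ r} → R :=
  fun u => if (u : V) = a then 1 else 0

/-- The orientation of `e` comes from `Sym2.out`; it is irrelevant, since only `vecMulVec b b` and
squared minors of these vectors enter. -/
noncomputable def edgeVec (R : Type*) [Ring R] (r : V) (e : Sym2 V) : {v // v ≠ r} → R :=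
  vertexVec R r e.out.1 - vertexVec R r e.out.2

theorem vertexVec_root [Zero R] [One R] (r : V) : vertexVec R r r = 0 := by
  funext u; simp [vertexVec, u.2]

theorem vertexVec_coe [Zero R] [One R] {r : V} (u : {v // v ≠ r}) :
    vertexVec R r u = Pi.single u 1 := by
  funext w; simp [vertexVec, Pi.single_apply, Subtype.ext_iff]

theorem edgeVec_mk [Ring R] (r a b : V) :
    edgeVec R r s(a, b) = vertexVec R r a - vertexVec R r b ∨
      edgeVec R r s(a, b) = -(vertexVec R r a - vertexVec R r b) := by
  rcases Sym2.eq_iff.mp (mk_out s(a, b)) with ⟨h1, h2⟩ | ⟨h1, h2⟩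
  · left; rw [edgeVec, h1, h2]
  · right; rw [edgeVec, h1, h2, neg_sub]

theorem vertexVec_sub_mem_span [Ring R] (r : V) (S : Set (Sym2 V)) {a b : V}
    (p : (fromEdgeSet S).Walk a b) :
    vertexVec R r a - vertexVec R r b ∈ Submodule.span R (edgeVec R r '' S) := by
  induction p with
  | nil => simp
  | @cons a c b hadj p ih =>
    have hmem : edgeVec R r s(a, c) ∈ Submodule.span R (edgeVec R r '' S) :=
      Submodule.subset_span ⟨s(a, c), ((fromEdgeSet_adj S).mp hadj).1, rfl⟩
    rw [← sub_add_sub_cancel _ (vertexVec R r c)]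
    refine Submodule.add_mem _ ?_ ih
    rcases edgeVec_mk (R := R) r a c with h | h
    · rwa [h] at hmem
    · rwa [h, Submodule.neg_mem_iff] at hmem

theorem vertexVec_dotProduct [Fintype V] [CommRing R] {r : V} (φ : V → R) (hr : φ r = 0)
    (a : V) : vertexVec R r a ⬝ᵥ (fun u => φ u) = φ a := by
  by_cases ha : a = r
  · rw [ha, vertexVec_root, zero_dotProduct, hr]
  · rw [show a = ((⟨a, ha⟩ : {v // v ≠ r}) : V) from rfl, vertexVec_coe, single_dotProduct,
      one_mul]

theorem edgeVec_dotProduct [Fintype V] [CommRing R] {r : V} (φ : V → R) (hr : φ r = 0)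
    (e : Sym2 V) : edgeVec R r e ⬝ᵥ (fun u => φ u) = φ e.out.1 - φ e.out.2 := by
  rw [edgeVec, sub_dotProduct, vertexVec_dotProduct φ hr, vertexVec_dotProduct φ hr]

theorem intCast_comp_edgeVec [CommRing R] (r : V) (e : Sym2 V) :
    (fun u => ((edgeVec ℤ r e u : ℤ) : R)) = edgeVec R r e := by
  funext u
  simp [edgeVec, vertexVec, apply_ite (Int.cast : ℤ → R)]

variable [Fintype V]

theorem span_edgeVec_eq_top [Ring R] (r : V) (S : Set (Sym2 V))
    (hS : (fromEdgeSet S).Connected) :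
    Submodule.span R (edgeVec R r '' S) = ⊤ := by
  rw [eq_top_iff, ← (Pi.basisFun R _).span_eq, Submodule.span_le]
  rintro _ ⟨u, rfl⟩
  have h := vertexVec_sub_mem_span (R := R) r S (hS.preconnected u r).some
  rw [vertexVec_root, sub_zero, vertexVec_coe] at h
  rwa [Pi.basisFun_apply]

theorem isUnit_det_edgeVec_of_connected (r : V) (S : Finset (Sym2 V))
    (hS : (fromEdgeSet (S : Set (Sym2 V))).Connected) (σ : {v // v ≠ r} ≃ S) :
    IsUnit (det (of fun i => edgeVec ℤ r (σ i))) := by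
  have hrows : Set.range (of fun i => edgeVec ℤ r (σ i)).row = edgeVec ℤ r '' S := by
    ext y
    constructor
    · rintro ⟨i, rfl⟩
      exact ⟨σ i, (σ i).2, rfl⟩
    · rintro ⟨e, he, rfl⟩
      refine ⟨σ.symm ⟨e, he⟩, ?_⟩
      change edgeVec ℤ r (σ (σ.symm ⟨e, he⟩)) = _
      rw [Equiv.apply_symm_apply]
  rw [← isUnit_iff_isUnit_det, ← vecMul_surjective_iff_isUnit]
  intro y
  have hy : y ∈ LinearMap.range (of fun i => edgeVec ℤ r (σ i)).vecMulLinear := by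
    rw [range_vecMulLinear, hrows, span_edgeVec_eq_top r _ hS]
    trivial
  exact hy

theorem det_edgeVec_eq_zero_of_not_connected [CommRing R] [IsDomain R] (r : V)
    (S : Finset (Sym2 V)) (hS : ¬ (fromEdgeSet (S : Set (Sym2 V))).Connected)
    (σ : {v // v ≠ r} ≃ S) :
    det (of fun i => edgeVec R r (σ i)) = 0 := by
  have hunreach : ∀ v, ∃ u, ¬ (fromEdgeSet (S : Set (Sym2 V))).Reachable v u := by
    simpa [connected_iff_exists_forall_reachable] using hS
  obtain ⟨u₀, hu₀⟩ := hunreach r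
  let χ : V → R := fun v => if (fromEdgeSet (S : Set (Sym2 V))).Reachable v u₀ then 1 else 0
  have hr : χ r = 0 := if_neg hu₀
  have hu₀r : u₀ ≠ r := by rintro rfl; exact hu₀ (Reachable.refl _)
  rw [← exists_mulVec_eq_zero_iff]
  refine ⟨fun u => χ u, fun h0 => by simpa [χ] using congrFun h0 ⟨u₀, hu₀r⟩, ?_⟩
  funext i
  change edgeVec R r (σ i) ⬝ᵥ (fun u => χ u) = 0
  rw [edgeVec_dotProduct χ hr, sub_eq_zero]
  set e : Sym2 V := (σ i : Sym2 V)
  by_cases hloop : e.out.1 = e.out.2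
  · rw [hloop]
  have hadj : (fromEdgeSet (S : Set (Sym2 V))).Adj e.out.1 e.out.2 :=
    (fromEdgeSet_adj _).mpr ⟨by rw [mk_out]; exact (σ i).2, hloop⟩
  have hiff : (fromEdgeSet (S : Set (Sym2 V))).Reachable e.out.1 u₀ ↔
      (fromEdgeSet (S : Set (Sym2 V))).Reachable e.out.2 u₀ :=
    ⟨hadj.symm.reachable.trans, hadj.reachable.trans⟩
  simp only [χ, hiff]

noncomputable def reducedLaplacian [CommRing R] (G : SimpleGraph V) (r : V) (x : Sym2 V → R) :
    Matrix {v // v ≠ r} {v // v ≠ r} R :=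
  ∑ e ∈ G.edgeFinset, x e • vecMulVec (edgeVec R r e) (edgeVec R r e)

theorem spanningTrees_eq_filter_powersetCard (G : SimpleGraph V) :
    spanningTrees G = (G.edgeFinset.powersetCard (Fintype.card V - 1)).filter
      fun t : Finset (Sym2 V) => (fromEdgeSet (t : Set (Sym2 V))).Connected := by
  ext t
  simp only [spanningTrees, mem_filter, mem_univ, true_and, mem_powersetCard, subset_iff,
    Set.subset_def, mem_coe, mem_edgeFinset]
  tauto

theorem det_reducedLaplacian [CommRing R] [IsDomain R] (G : SimpleGraph V) (r : V)
    (x : Sym2 V → R) :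
    det (reducedLaplacian G r x) = ∑ t ∈ spanningTrees G, ∏ e ∈ t, x e := by
  have hcard : Fintype.card {v // v ≠ r} = Fintype.card V - 1 := by
    simp [Fintype.card_subtype_compl]
  rw [reducedLaplacian, det_sum_smul_vecMulVec_eq_sum_powersetCard _ _ _
    (fun S => if (fromEdgeSet (S : Set (Sym2 V))).Connected then 1 else 0), hcard,
    spanningTrees_eq_filter_powersetCard, sum_filter]
  · simp only [mul_ite, mul_one, mul_zero]
  intro S _ σ
  split_ifs with hS
  · have hcast : (of fun i => edgeVec R r (σ i)) =
        (of fun i => edgeVec ℤ r (σ i)).map Int.cast := by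
      ext i j
      simp [← intCast_comp_edgeVec (R := R)]
    rw [hcast, ← Int.cast_det, ← Int.cast_pow,
      Int.isUnit_sq (isUnit_det_edgeVec_of_connected r S hS σ), Int.cast_one]
  · rw [det_edgeVec_eq_zero_of_not_connected r S hS σ, zero_pow two_ne_zero]

theorem isSymm_reducedLaplacian [CommRing R] (G : SimpleGraph V) (r : V) (x : Sym2 V → R) :
    (reducedLaplacian G r x).IsSymm :=
  IsSymm.ext fun i j => by simp [reducedLaplacian, Matrix.sum_apply, vecMulVec_apply, mul_comm]

theorem reducedLaplacian_update [CommRing R] {G : SimpleGraph V} (r : V) (x : Sym2 V → R)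
    {e : Sym2 V} (he : e ∈ G.edgeSet) (a : R) :
    reducedLaplacian G r (update x e a) =
      reducedLaplacian G r x + (a - x e) • vecMulVec (edgeVec R r e) (edgeVec R r e) := by
  have hmem : e ∈ G.edgeFinset := mem_edgeFinset.mpr he
  simp only [reducedLaplacian]
  rw [← add_sum_erase _ _ hmem, ← add_sum_erase _ _ hmem, update_self,
    sum_congr rfl fun e' he' => by rw [update_of_ne (ne_of_mem_erase he')], sub_smul]
  abel

end MatrixTree

open MatrixTree

section DetLap
variable {V : Type*} [Fintype V] [DecidableEq V] (G : SimpleGraph V)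

theorem detLap_eq_card_mul_det (r : V) (x : Sym2 V → ℝ) :
    detLap G x = Fintype.card V * det (reducedLaplacian G r x) := by
  rw [detLap, det_reducedLaplacian]

theorem detLap_nonneg {x : Sym2 V → ℝ} (hx : ∀ e, 0 ≤ x e) : 0 ≤ detLap G x :=
  mul_nonneg (Nat.cast_nonneg _) (sum_nonneg fun _ _ => prod_nonneg fun e _ => hx e)

end DetLap

/-- for a finite connected graph, `q ≥ 1`, `κ ∈ {1,q}^E` with
`κ_f = κ_g = 1` for distinct edges `f, g`, one has
`det Δ_{κ⁺⁺} ⬝ det Δ_{κ⁻⁻} ≤ det Δ_{κ⁺⁻} ⬝ det Δ_{κ⁻⁺}`. -/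
theorem detLap_lattice_two_edges {V : Type*} [Fintype V] [DecidableEq V]
    (G : SimpleGraph V) (hG : G.Connected)
    (q : ℝ) (hq : 1 ≤ q) (κ : Sym2 V → ℝ) (hκ : ∀ e, κ e = 1 ∨ κ e = q)
    (f g : Sym2 V) (hf : f ∈ G.edgeSet) (hg : g ∈ G.edgeSet) (hfg : f ≠ g)
    (hκf : κ f = 1) (hκg : κ g = 1) :
    detLap G (Function.update (Function.update κ f q) g q) * detLap G κ ≤
      detLap G (Function.update κ f q) * detLap G (Function.update κ g q) := by
  obtain ⟨r⟩ := hG.nonempty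
  have hκ₀ : ∀ e, 0 ≤ κ e := fun e => by rcases hκ e with h | h <;> linarith
  have hκq₀ : ∀ e' : Sym2 V, ∀ e, 0 ≤ update κ e' q e := fun e' =>
    (forall_update_iff κ fun _ y => 0 ≤ y).mpr ⟨by linarith, fun e _ => hκ₀ e⟩
  set L := reducedLaplacian G r κ
  set P : Sym2 V → Matrix _ _ ℝ := fun e => vecMulVec (edgeVec ℝ r e) (edgeVec ℝ r e)
  have hLf : reducedLaplacian G r (update κ f q) = L + (q - 1) • P f := by
    rw [reducedLaplacian_update r κ hf, hκf]
  have hLg : reducedLaplacian G r (update κ g q) = L + (q - 1) • P g := by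
    rw [reducedLaplacian_update r κ hg, hκg]
  have hLfg : reducedLaplacian G r (update (update κ f q) g q) =
      L + (q - 1) • P f + (q - 1) • P g := by
    rw [reducedLaplacian_update r _ hg, hLf, update_of_ne hfg.symm, hκg]
  by_cases hL : det L = 0
  · rw [detLap_eq_card_mul_det G r κ, hL, mul_zero, mul_zero]
    exact mul_nonneg (detLap_nonneg G (hκq₀ f)) (detLap_nonneg G (hκq₀ g))
  have key := det_add_two_vecMulVec_mul_det_le (isSymm_reducedLaplacian G r κ) hL
    (edgeVec ℝ r f) (edgeVec ℝ r g) (q - 1)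
  simp only [detLap_eq_card_mul_det G r, hLf, hLg, hLfg]
  calc _ = (Fintype.card V : ℝ) ^ 2 * (det (L + (q - 1) • P f + (q - 1) • P g) * det L) := by
        ring
    _ ≤ (Fintype.card V : ℝ) ^ 2 * (det (L + (q - 1) • P f) * det (L + (q - 1) • P g)) := by
        gcongr
    _ = _ := by ring
end

section
/- Let G be a finite connected graph, G' = (V',E') a connected subgraph, F ⊂ E a set of edges, and κ ∈ {1,q}^E with κ_f = 1 for an edge f ∈ E'. Let κ⁺ set κ_f = q. Then det Δ^{G'}_{κ⁺}/det Δ^{G'}_κ ≥ det Δ^{G}_{κ⁺}/det Δ^{G}_κ ≥ det Δ^{G/F}_{κ⁺}/det Δ^{G/F}_κ, where G/F denotes the graph with all edges of F contracted. -/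
set_option linter.unusedSectionVars false
set_option maxHeartbeats 1000000
open scoped Classical

/-- Spanning trees of a subgraph `H` of `G`: edge sets contained in
`E(H)` connecting all vertices of `H` and of cardinality `|V(H)| - 1`. -/
noncomputable def subSpanningTrees {V : Type*} [Fintype V] [DecidableEq V]
    (G : SimpleGraph V) (H : G.Subgraph) : Finset (Finset (Sym2 V)) :=
  Finset.univ.filter fun t =>
    ↑t ⊆ H.edgeSet ∧
      (∀ x ∈ H.verts, ∀ y ∈ H.verts,
        (SimpleGraph.fromEdgeSet (↑t : Set (Sym2 V))).Reachable x y) ∧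
      t.card = Nat.card H.verts - 1

/-- Spanning trees of the contracted (multi)graph `G/F`: edge sets of `G`
avoiding `F`, joining distinct `F`-components, which together with `F` connect
`G` and have cardinality (number of `F`-components) − 1. -/
noncomputable def contractedSpanningTrees {V : Type*} [Fintype V] [DecidableEq V]
    (G : SimpleGraph V) (F : Finset (Sym2 V)) : Finset (Finset (Sym2 V)) :=
  Finset.univ.filter fun t =>
    ↑t ⊆ G.edgeSet ∧ (∀ e ∈ t, e ∉ F) ∧
      (∀ x y : V, s(x, y) ∈ t →
        ¬ (SimpleGraph.fromEdgeSet (↑F : Set (Sym2 V))).Reachable x y) ∧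
      (SimpleGraph.fromEdgeSet ((↑t : Set (Sym2 V)) ∪ ↑F)).Connected ∧
      t.card =
        Nat.card (SimpleGraph.fromEdgeSet (↑F : Set (Sym2 V))).ConnectedComponent - 1

/-- Kirchhoff determinant of the weighted Laplacian of a subgraph `H ⊆ G`. -/
noncomputable def detLapSub {V : Type*} [Fintype V] [DecidableEq V]
    (G : SimpleGraph V) (H : G.Subgraph) (κ : Sym2 V → ℝ) : ℝ :=
  (Nat.card H.verts : ℝ) * ∑ t ∈ subSpanningTrees G H, ∏ e ∈ t, κ e

/-- Kirchhoff determinant of the weighted Laplacian of the contraction `G/F`. -/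
noncomputable def detLapContract {V : Type*} [Fintype V] [DecidableEq V]
    (G : SimpleGraph V) (F : Finset (Sym2 V)) (κ : Sym2 V → ℝ) : ℝ :=
  (Nat.card (SimpleGraph.fromEdgeSet (↑F : Set (Sym2 V))).ConnectedComponent : ℝ) *
    ∑ t ∈ contractedSpanningTrees G F, ∏ e ∈ t, κ e


open Finset

namespace DetLapAux

variable {V : Type*} [Fintype V] [DecidableEq V] {W : Type*} [Fintype W] [DecidableEq W]

/-- One step along an edge of `t`, projected by `π`. -/
def pstep (π : V → W) (t : Finset (Sym2 V)) (a b : W) : Prop :=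
  ∃ x y, s(x, y) ∈ t ∧ π x = a ∧ π y = b

/-- Reachability in the projected graph. -/
def PReach (π : V → W) (t : Finset (Sym2 V)) : W → W → Prop :=
  Relation.ReflTransGen (pstep π t)

/-- Connectivity of the projected graph. -/
def Conn (π : V → W) (t : Finset (Sym2 V)) : Prop := ∀ a b, PReach π t a b

variable {π : V → W} {t s : Finset (Sym2 V)} {a b c₀ : W}

lemma pstep_symm : Symmetric (pstep π t) := by
  rintro a b ⟨x, y, hxy, hx, hy⟩
  exact ⟨y, x, by rwa [Sym2.eq_swap], hy, hx⟩

lemma PReach.refl : PReach π t a a := Relation.ReflTransGen.refl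

lemma PReach.symm (h : PReach π t a b) : PReach π t b a :=
  haveI : Std.Symm (pstep π t) := ⟨fun _ _ h => pstep_symm h⟩
  (Relation.ReflTransGen.symmetric (r := pstep π t)).symm _ _ h

lemma PReach.trans (h : PReach π t a b) (h' : PReach π t b c₀) : PReach π t a c₀ :=
  Relation.ReflTransGen.trans h h'

lemma PReach.mono (hts : t ⊆ s) (h : PReach π t a b) : PReach π s a b :=
  Relation.ReflTransGen.mono (r := pstep π t) (p := pstep π s)
    (fun _ _ ⟨x, y, h1, h2, h3⟩ => ⟨x, y, hts h1, h2, h3⟩) _ _ h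

lemma preach_of_mem {x y : V} (h : s(x, y) ∈ t) : PReach π t (π x) (π y) :=
  Relation.ReflTransGen.single ⟨x, y, h, rfl, rfl⟩

/-- Key merging lemma: reachability after inserting an edge. -/
lemma preach_insert {x y : V} (h : PReach π (insert s(x, y) t) a b) :
    PReach π t a b ∨ ((PReach π t a (π x) ∨ PReach π t a (π y)) ∧
      (PReach π t b (π x) ∨ PReach π t b (π y))) := by
  induction h with
  | refl => exact Or.inl PReach.refl
  | tail h step ih =>
    rename_i c d
    obtain ⟨u, v, huv, hu, hv⟩ := step
    rcases Finset.mem_insert.mp huv with heq | hmem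
    · -- the step uses the new edge
      have hcls : (π u = π x ∧ π v = π y) ∨ (π u = π y ∧ π v = π x) := by
        rcases Sym2.eq_iff.mp heq with ⟨h1, h2⟩ | ⟨h1, h2⟩
        · exact Or.inl ⟨by rw [h1], by rw [h2]⟩
        · exact Or.inr ⟨by rw [h1], by rw [h2]⟩
      have hc : c = π x ∨ c = π y := by
        rcases hcls with ⟨h1, _⟩ | ⟨h1, _⟩
        · exact Or.inl (hu ▸ h1.symm ▸ rfl)
        · exact Or.inr (hu ▸ h1.symm ▸ rfl)
      have hd : d = π x ∨ d = π y := by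
        rcases hcls with ⟨_, h2⟩ | ⟨_, h2⟩
        · exact Or.inr (hv ▸ h2.symm ▸ rfl)
        · exact Or.inl (hv ▸ h2.symm ▸ rfl)
      have hd' : PReach π t d (π x) ∨ PReach π t d (π y) := by
        rcases hd with h | h
        · exact Or.inl (h ▸ PReach.refl)
        · exact Or.inr (h ▸ PReach.refl)
      rcases ih with hab | ⟨ha, _⟩
      · refine Or.inr ⟨?_, hd'⟩
        rcases hc with h | h
        · exact Or.inl (h ▸ hab)
        · exact Or.inr (h ▸ hab)
      · exact Or.inr ⟨ha, hd'⟩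
    · -- the step uses an old edge
      have hstep : pstep π t c d := ⟨u, v, hmem, hu, hv⟩
      rcases ih with hab | ⟨ha, hb⟩
      · exact Or.inl (hab.tail hstep)
      · refine Or.inr ⟨ha, ?_⟩
        have : PReach π t d c := Relation.ReflTransGen.single (pstep_symm hstep)
        rcases hb with h | h
        · exact Or.inl (this.trans h)
        · exact Or.inr (this.trans h)

lemma preach_erase_cases {x y : V} (he : s(x, y) ∈ t) (h : PReach π t a b) :
    PReach π (t.erase s(x, y)) a b ∨
      ((PReach π (t.erase s(x, y)) a (π x) ∨ PReach π (t.erase s(x, y)) a (π y)) ∧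
       (PReach π (t.erase s(x, y)) b (π x) ∨ PReach π (t.erase s(x, y)) b (π y))) := by
  have : PReach π (insert s(x, y) (t.erase s(x, y))) a b := by
    rwa [Finset.insert_erase he]
  exact preach_insert this

/-- If the two sides of the removed edge are joined, erasing it doesn't matter. -/
lemma preach_erase_of_bridge {x y : V} (he : s(x, y) ∈ t)
    (hxy : PReach π (t.erase s(x, y)) (π x) (π y)) (h : PReach π t a b) :
    PReach π (t.erase s(x, y)) a b := by
  rcases preach_erase_cases he h with h' | ⟨ha, hb⟩
  · exact h'
  · have key : ∀ {z : W}, PReach π (t.erase s(x, y)) z (π x) ∨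
        PReach π (t.erase s(x, y)) z (π y) → PReach π (t.erase s(x, y)) z (π x) := by
      rintro z (h | h)
      · exact h
      · exact h.trans hxy.symm
    exact (key ha).trans (key hb).symm

/-- Chains avoiding an unreachable class never use its edges. -/
lemma preach_avoid {u : W} (hu : ¬ PReach π t a u) (h : PReach π t a b) :
    PReach π (t.filter fun e => ∀ x y, e = s(x, y) → π x ≠ u ∧ π y ≠ u) a b := by
  induction h with
  | refl => exact PReach.refl
  | tail h step ih =>
    rename_i c d
    obtain ⟨p, r, hpr, hp, hr⟩ := step
    have hac : PReach π t a c := h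
    by_cases hd : d = u
    · exact absurd (hd ▸ (hac.tail ⟨p, r, hpr, hp, hr⟩)) hu
    · by_cases hc : c = u
      · exact absurd (hc ▸ hac) hu
      · refine ih.tail ⟨p, r, Finset.mem_filter.mpr ⟨hpr, ?_⟩, hp, hr⟩
        rintro x' y' hxy
        rcases Sym2.eq_iff.mp hxy with ⟨h1, h2⟩ | ⟨h1, h2⟩
        · subst h1; subst h2
          exact ⟨by rw [hp]; exact hc, by rw [hr]; exact hd⟩
        · subst h1; subst h2
          exact ⟨by rw [hr]; exact hd, by rw [hp]; exact hc⟩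

lemma preach_empty : PReach π (∅ : Finset (Sym2 V)) a b ↔ a = b := by
  constructor
  · intro h
    induction h with
    | refl => rfl
    | tail h step ih =>
      obtain ⟨x, y, hxy, _, _⟩ := step
      simp at hxy
  · rintro rfl; exact PReach.refl

/-- The partition of `W` into `t`-components. -/
def psetoid (π : V → W) (t : Finset (Sym2 V)) : Setoid W :=
  ⟨PReach π t, ⟨fun _ => PReach.refl, PReach.symm, PReach.trans⟩⟩

/-- Number of components. -/
noncomputable def ncomp (π : V → W) (t : Finset (Sym2 V)) : ℕ :=
  Nat.card (Quotient (psetoid π t))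

lemma ncomp_empty : ncomp π (∅ : Finset (Sym2 V)) = Fintype.card W := by
  have e : Quotient (psetoid π (∅ : Finset (Sym2 V))) ≃ W := by
    refine ⟨Quotient.lift id fun a b h => preach_empty.mp h, Quotient.mk _, ?_, ?_⟩
    · exact Quotient.ind fun a => rfl
    · exact fun a => rfl
  rw [ncomp, Nat.card_congr e, Nat.card_eq_fintype_card]

lemma ncomp_le_insert (x y : V) (t : Finset (Sym2 V)) :
    ncomp π t ≤ ncomp π (insert s(x, y) t) + 1 := by
  classical
  haveI : Finite (Quotient (psetoid π t)) := Quotient.finite _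
  haveI : Finite (Quotient (psetoid π (insert s(x, y) t))) := Quotient.finite _
  haveI i1 : Fintype (Quotient (psetoid π t)) := Fintype.ofFinite _
  haveI i2 : Fintype (Quotient (psetoid π (insert s(x, y) t))) := Fintype.ofFinite _
  set Q1 := Quotient (psetoid π t)
  set Q2 := Quotient (psetoid π (insert s(x, y) t))
  let g : Q1 → Q2 := Quotient.map id fun a b h => h.mono (Finset.subset_insert _ _)
  have hg : ∀ a : W, g (Quotient.mk _ a) = Quotient.mk _ a := fun a => rfl
  have hinj : Set.InjOn g ((Finset.univ.erase (Quotient.mk _ (π y)) : Finset Q1) : Set Q1) := by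
    intro q1 h1 q2 h2 heq
    rw [Finset.mem_coe] at h1 h2
    induction q1 using Quotient.ind with | _ a =>
    induction q2 using Quotient.ind with | _ b =>
    rw [hg a, hg b] at heq
    have hab : PReach π (insert s(x, y) t) a b := Quotient.exact heq
    have h1' : ¬ PReach π t a (π y) := by
      intro h
      exact (Finset.mem_erase.mp h1).1 (Quotient.sound h)
    have h2' : ¬ PReach π t b (π y) := by
      intro h
      exact (Finset.mem_erase.mp h2).1 (Quotient.sound h)
    rcases preach_insert hab with h | ⟨ha, hb⟩
    · exact Quotient.sound h
    · have hax : PReach π t a (π x) := ha.resolve_right h1'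
      have hbx : PReach π t b (π x) := hb.resolve_right h2'
      exact Quotient.sound (hax.trans hbx.symm)
  have hcard : (Finset.univ.erase (Quotient.mk (psetoid π t) (π y))).card ≤ Fintype.card Q2 := by
    refine le_trans (Finset.card_le_card_of_injOn g (fun a _ => Finset.mem_univ _) hinj) ?_
    simp [Finset.card_univ]
  have : Fintype.card Q1 - 1 ≤ Fintype.card Q2 := by
    rwa [Finset.card_erase_of_mem (Finset.mem_univ _), Finset.card_univ] at hcard
  have h1 : ncomp π t = Fintype.card Q1 := Nat.card_eq_fintype_card
  have h2 : ncomp π (insert s(x, y) t) = Fintype.card Q2 := Nat.card_eq_fintype_card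
  omega

lemma card_le_ncomp_add (t : Finset (Sym2 V)) : Fintype.card W ≤ ncomp π t + t.card := by
  classical
  induction t using Finset.induction_on with
  | empty => rw [ncomp_empty]; simp
  | insert e t hnotmem ih =>
    induction e using Sym2.inductionOn with | _ x y =>
    have := ncomp_le_insert (π := π) x y t
    rw [Finset.card_insert_of_notMem hnotmem]
    omega

lemma conn_card_le [Nonempty W] (h : Conn π t) : Fintype.card W ≤ t.card + 1 := by
  have hs : Subsingleton (Quotient (psetoid π t)) :=
    ⟨Quotient.ind fun a => Quotient.ind fun b => Quotient.sound (h a b)⟩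
  have hn : Nonempty (Quotient (psetoid π t)) := Nonempty.map (Quotient.mk _) ‹_›
  haveI : Unique (Quotient (psetoid π t)) := uniqueOfSubsingleton hn.some
  have h1 : ncomp π t = 1 := Nat.card_unique
  have := card_le_ncomp_add (π := π) t
  omega

lemma tree_not_conn_erase (htc : Conn π t) (hcard : t.card = Fintype.card W - 1)
    {e : Sym2 V} (he : e ∈ t) : ¬ Conn π (t.erase e) := by
  intro h
  haveI : Nonempty W := by
    induction e using Sym2.inductionOn with | _ x y => exact ⟨π x⟩
  have h1 : 1 ≤ t.card := Finset.card_pos.mpr ⟨e, he⟩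
  have h2 := conn_card_le h
  rw [Finset.card_erase_of_mem he] at h2
  omega

lemma tree_side (htc : Conn π t) (hcard : t.card = Fintype.card W - 1)
    {x y : V} (he : s(x, y) ∈ t) : ¬ PReach π (t.erase s(x, y)) (π x) (π y) := by
  intro hr
  exact tree_not_conn_erase htc hcard he fun a b =>
    preach_erase_of_bridge he hr (htc a b)

lemma tree_two_sides (htc : Conn π t) {x y : V} (he : s(x, y) ∈ t) (a : W) :
    PReach π (t.erase s(x, y)) a (π x) ∨ PReach π (t.erase s(x, y)) a (π y) := by
  rcases preach_erase_cases he (htc a (π x)) with h | ⟨ha, _⟩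
  · exact Or.inl h
  · exact ha

lemma tree_not_both_sides (htc : Conn π t) (hcard : t.card = Fintype.card W - 1)
    {x y : V} (he : s(x, y) ∈ t) (a : W)
    (h1 : PReach π (t.erase s(x, y)) a (π x)) (h2 : PReach π (t.erase s(x, y)) a (π y)) :
    False :=
  tree_side htc hcard he (h1.symm.trans h2)

lemma erase_comm' {α : Type*} [DecidableEq α] (s : Finset α) (a b : α) :
    (s.erase a).erase b = (s.erase b).erase a := by
  ext x; simp [Finset.mem_erase]; tauto

/-- Collapsing a class `β` onto `α`. -/
def cmap {W : Type*} [DecidableEq W] (α β : W) (hαβ : α ≠ β) : W → {z : W // z ≠ β} :=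
  fun z => if h : z = β then ⟨α, hαβ⟩ else ⟨z, h⟩

lemma preach_collapse {α β : W} (hαβ : α ≠ β) {x y : V}
    (hx : π x = α) (hy : π y = β) {z w : W}
    (h : PReach π t z w) :
    PReach (cmap α β hαβ ∘ π) (t.erase s(x, y)) (cmap α β hαβ z) (cmap α β hαβ w) := by
  induction h with
  | refl => exact PReach.refl
  | tail h step ih =>
    rename_i c e
    obtain ⟨p, q, hpq, hp, hq⟩ := step
    by_cases hpar : s(p, q) = s(x, y)
    · -- collapsed edge: both endpoints map to α
      have : cmap α β hαβ c = cmap α β hαβ e := by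
        rcases Sym2.eq_iff.mp hpar with ⟨h1, h2⟩ | ⟨h1, h2⟩
        · rw [← hp, ← hq, h1, h2, hx, hy]
          simp [cmap, hαβ]
        · rw [← hp, ← hq, h1, h2, hx, hy]
          simp [cmap, hαβ]
      rwa [← this]
    · exact ih.tail ⟨p, q, Finset.mem_erase.mpr ⟨hpar, hpq⟩,
        by rw [Function.comp_apply, hp], by rw [Function.comp_apply, hq]⟩

lemma preach_lift {α β : W} (hαβ : α ≠ β) {x y : V}
    (hx : π x = α) (hy : π y = β) {z w : {z : W // z ≠ β}} {s : Finset (Sym2 V)}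
    (h : PReach (cmap α β hαβ ∘ π) s z w) :
    PReach π (insert s(x, y) s) z.1 w.1 := by
  have key : ∀ v : V, PReach π (insert s(x, y) s) ((cmap α β hαβ (π v)).1) (π v) := by
    intro v
    by_cases hv : π v = β
    · have h1 : (cmap α β hαβ (π v)).1 = α := by simp [cmap, hv]
      rw [h1, ← hx, hv, ← hy]
      exact preach_of_mem (Finset.mem_insert_self _ _)
    · have h1 : (cmap α β hαβ (π v)).1 = π v := by simp [cmap, hv]
      rw [h1]
      exact PReach.refl
  induction h with
  | refl => exact PReach.refl
  | tail h step ih =>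
    rename_i c e
    obtain ⟨p, q, hpq, hp, hq⟩ := step
    have h1 : c.1 = (cmap α β hαβ (π p)).1 := by rw [← hp]; rfl
    have h2 : e.1 = (cmap α β hαβ (π q)).1 := by rw [← hq]; rfl
    have hstep : PReach π (insert s(x, y) s) (π p) (π q) :=
      preach_of_mem (Finset.mem_insert_of_mem hpq)
    exact ih.trans ((h1 ▸ key p).trans (hstep.trans (h2 ▸ (key q).symm)))

/-- A parallel edge makes the other one removable. -/
lemma parallel_conn_erase {x y p q : V} (he : s(x, y) ∈ t) (hne : s(p, q) ≠ s(x, y))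
    (he' : s(p, q) ∈ t)
    (hcl : (π p = π x ∧ π q = π y) ∨ (π p = π y ∧ π q = π x))
    (hconn : Conn π t) : Conn π (t.erase s(p, q)) := by
  have hxy : s(x, y) ∈ t.erase s(p, q) := Finset.mem_erase.mpr ⟨fun h => hne h.symm, he⟩
  have hbr : PReach π (t.erase s(p, q)) (π p) (π q) := by
    have := preach_of_mem (π := π) hxy
    rcases hcl with ⟨h1, h2⟩ | ⟨h1, h2⟩
    · rw [h1, h2]; exact this
    · rw [h1, h2]; exact this.symm
  exact fun a b => preach_erase_of_bridge he' hbr (hconn a b)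

omit [Fintype W] in
lemma cmap_self {α β : W} (hαβ : α ≠ β) (z : {z : W // z ≠ β}) :
    cmap α β hαβ z.1 = z := by
  simp [cmap, z.2]

omit [Fintype W] in
lemma cmap_ne {α β : W} (hαβ : α ≠ β) {z : W} (hz : z ≠ β) :
    cmap α β hαβ z = ⟨z, hz⟩ := by simp [cmap, hz]

lemma exists_sep_edge (n : ℕ) :
    ∀ {W' : Type u_w} [Fintype W'] [DecidableEq W'] (π' : V → W') (t : Finset (Sym2 V)),
      t.card = n →
      (∀ x y : V, s(x, y) ∈ t → π' x ≠ π' y) →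
      Conn π' t → t.card = Fintype.card W' - 1 →
      ∀ a b : W', a ≠ b →
      ∃ e ∈ t, (∃ x y : V, e = s(x, y) ∧ π' x = a) ∧ ¬ PReach π' (t.erase e) a b := by
  induction n using Nat.strong_induction_on with
  | _ n IH =>
  intro W' _ _ π' t hn hcross hconn hcard a b hab
  rcases Relation.ReflTransGen.cases_head (hconn a b) with heq | ⟨c, ⟨x, y, hxy, hxa, hyc⟩, _⟩
  · exact absurd heq hab
  by_cases hsep : PReach π' (t.erase s(x, y)) a b
  swap
  · exact ⟨s(x, y), hxy, ⟨x, y, rfl, hxa⟩, hsep⟩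
  -- collapse the class of y into a
  have haβ : a ≠ π' y := by rw [← hxa]; exact hcross x y hxy
  set β := π' y with hβ
  have hbβ : b ≠ β := by
    intro h
    refine tree_side hconn hcard hxy ?_
    rwa [hxa, ← hβ, ← h]
  set π'' : V → {z : W' // z ≠ β} := cmap a β haβ ∘ π' with hπ''
  set t' := t.erase s(x, y) with ht'
  have hm2 : 2 ≤ Fintype.card W' := Fintype.one_lt_card_iff_nontrivial.mpr ⟨⟨a, β, haβ⟩⟩
  have hcardW'' : Fintype.card {z : W' // z ≠ β} = Fintype.card W' - 1 := by
    classical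
    rw [Fintype.card_subtype_compl, Fintype.card_subtype_eq]
  have hn1 : 1 ≤ n := hn ▸ Finset.card_pos.mpr ⟨_, hxy⟩
  have hn' : t'.card = n - 1 := by rw [ht', Finset.card_erase_of_mem hxy, hn]
  have hcross' : ∀ p q : V, s(p, q) ∈ t' → π'' p ≠ π'' q := by
    intro p q hpq heq
    have hmem : s(p, q) ∈ t := Finset.mem_of_mem_erase hpq
    have hpq' : π' p ≠ π' q := hcross p q hmem
    have hne : s(p, q) ≠ s(x, y) := (Finset.mem_erase.mp hpq).1
    have hnc := tree_not_conn_erase hconn hcard hmem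
    simp only [hπ'', Function.comp_apply] at heq
    by_cases h1 : π' p = β <;> by_cases h2 : π' q = β
    · exact hpq' (h1.trans h2.symm)
    · rw [cmap_ne haβ h2, h1] at heq
      have h3 : a = π' q := by
        have := congrArg Subtype.val heq
        simpa [cmap] using this
      exact hnc (parallel_conn_erase hxy hne hmem (Or.inr ⟨by rw [h1, hβ], by rw [← h3, hxa]⟩) hconn)
    · rw [cmap_ne haβ h1, h2] at heq
      have h3 : π' p = a := by
        have := congrArg Subtype.val heq
        simpa [cmap] using this
      exact hnc (parallel_conn_erase hxy hne hmem (Or.inl ⟨by rw [h3, hxa], by rw [h2, hβ]⟩) hconn)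
    · rw [cmap_ne haβ h1, cmap_ne haβ h2] at heq
      exact hpq' (by simpa using congrArg Subtype.val heq)
  have hconn' : Conn π'' t' := by
    intro z z'
    have h0 := preach_collapse haβ hxa hβ.symm (hconn z.1 z'.1)
    rwa [cmap_self, cmap_self] at h0
  have hcard' : t'.card = Fintype.card {z : W' // z ≠ β} - 1 := by omega
  have hcab : cmap a β haβ a ≠ cmap a β haβ b := by
    rw [cmap_ne haβ haβ, cmap_ne haβ hbβ]
    intro h
    exact hab (by simpa using congrArg Subtype.val h)
  obtain ⟨e₂, he₂t', ⟨p, q, hepq, hpa⟩, hnr⟩ :=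
    IH (n - 1) (by omega) π'' t' hn' hcross' hconn' hcard' _ _ hcab
  have he₂t : e₂ ∈ t := Finset.mem_of_mem_erase he₂t'
  have he₂ne : e₂ ≠ s(x, y) := (Finset.mem_erase.mp he₂t').1
  refine ⟨e₂, he₂t, ?_, ?_⟩
  · -- incidence at a
    by_cases hpβ : π' p = β
    · exfalso
      have havoid : ¬ PReach π' t' a β := by
        rw [← hxa, hβ]
        exact tree_side hconn hcard hxy
      have h1 := preach_avoid havoid hsep
      have hsub : (t'.filter fun e => ∀ u v : V, e = s(u, v) → π' u ≠ β ∧ π' v ≠ β) ⊆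
          t'.erase e₂ := by
        refine Finset.subset_erase.mpr ⟨Finset.filter_subset _ _, ?_⟩
        intro hmem
        exact ((Finset.mem_filter.mp hmem).2 p q hepq).1 hpβ
      have h2 : PReach π' (t'.erase e₂) a b := h1.mono hsub
      have h3 := preach_collapse haβ hxa hβ.symm h2
      exact hnr (h3.mono (Finset.erase_subset _ _))
    · refine ⟨p, q, hepq, ?_⟩
      have : π'' p = cmap a β haβ a := hpa
      rw [hπ''] at this
      simp only [Function.comp_apply] at this
      rw [cmap_ne haβ hpβ, cmap_ne haβ haβ] at this
      simpa using congrArg Subtype.val this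
  · -- separation
    intro hr
    have h3 := preach_collapse haβ hxa hβ.symm hr
    rw [erase_comm'] at h3
    exact hnr h3

lemma minimal_conn_card (n : ℕ) :
    ∀ {W' : Type u_w} [Fintype W'] [DecidableEq W'] [Nonempty W'] (π' : V → W')
      (t : Finset (Sym2 V)),
      t.card = n →
      (∀ x y : V, s(x, y) ∈ t → π' x ≠ π' y) →
      Conn π' t → (∀ e ∈ t, ¬ Conn π' (t.erase e)) →
      n = Fintype.card W' - 1 := by
  induction n using Nat.strong_induction_on with
  | _ n IH =>
  intro W' _ _ _ π' t hn hcross hconn hmin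
  rcases Finset.eq_empty_or_nonempty t with rfl | ⟨e, he⟩
  · -- empty: W' is a single class
    have hsub : ∀ a b : W', a = b := fun a b => preach_empty.mp (hconn a b)
    have h1 : Fintype.card W' = 1 := by
      have : Subsingleton W' := ⟨hsub⟩
      have h2 := Fintype.card_le_one_iff_subsingleton.mpr this
      have h3 := Fintype.card_pos (α := W')
      omega
    simp at hn
    omega
  · induction e using Sym2.inductionOn with | _ x y =>
    have hαβ : π' x ≠ π' y := hcross x y he
    set α := π' x with hα
    set β := π' y with hβ
    set π'' : V → {z : W' // z ≠ β} := cmap α β hαβ ∘ π' with hπ''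
    set t' := t.erase s(x, y) with ht'
    have hn1 : 1 ≤ n := hn ▸ Finset.card_pos.mpr ⟨_, he⟩
    have hn' : t'.card = n - 1 := by rw [ht', Finset.card_erase_of_mem he, hn]
    have hm2 : 2 ≤ Fintype.card W' := Fintype.one_lt_card_iff_nontrivial.mpr ⟨⟨α, β, hαβ⟩⟩
    have hcardW'' : Fintype.card {z : W' // z ≠ β} = Fintype.card W' - 1 := by
      classical
      rw [Fintype.card_subtype_compl, Fintype.card_subtype_eq]
    have hxymem : ∀ {e₂ : Sym2 V}, e₂ ∈ t' → s(x, y) ∈ t.erase e₂ := by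
      intro e₂ he₂
      exact Finset.mem_erase.mpr ⟨fun h => (Finset.mem_erase.mp he₂).1 h.symm, he⟩
    have hcross' : ∀ p q : V, s(p, q) ∈ t' → π'' p ≠ π'' q := by
      intro p q hpq heq
      have hmem : s(p, q) ∈ t := Finset.mem_of_mem_erase hpq
      have hpq' : π' p ≠ π' q := hcross p q hmem
      have hne : s(p, q) ≠ s(x, y) := (Finset.mem_erase.mp hpq).1
      have hnc := hmin _ hmem
      simp only [hπ'', Function.comp_apply] at heq
      by_cases h1 : π' p = β <;> by_cases h2 : π' q = β
      · exact hpq' (h1.trans h2.symm)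
      · rw [cmap_ne hαβ h2, h1] at heq
        have h3 : α = π' q := by
          have := congrArg Subtype.val heq
          simpa [cmap] using this
        exact hnc (parallel_conn_erase he hne hmem (Or.inr ⟨by rw [h1, hβ], by rw [← h3, hα]⟩) hconn)
      · rw [cmap_ne hαβ h1, h2] at heq
        have h3 : π' p = α := by
          have := congrArg Subtype.val heq
          simpa [cmap] using this
        exact hnc (parallel_conn_erase he hne hmem (Or.inl ⟨by rw [h3, hα], by rw [h2, hβ]⟩) hconn)
      · rw [cmap_ne hαβ h1, cmap_ne hαβ h2] at heq
        exact hpq' (by simpa using congrArg Subtype.val heq)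
    have hconn' : Conn π'' t' := by
      intro z z'
      have h0 := preach_collapse hαβ hα.symm hβ.symm (hconn z.1 z'.1)
      rwa [cmap_self, cmap_self] at h0
    have hmin' : ∀ e₂ ∈ t', ¬ Conn π'' (t'.erase e₂) := by
      intro e₂ he₂ hc2
      refine hmin e₂ (Finset.mem_of_mem_erase he₂) ?_
      intro a' b'
      have h1 : PReach π'' (t'.erase e₂) (cmap α β hαβ a') (cmap α β hαβ b') := hc2 _ _
      have h2 := preach_lift hαβ hα.symm hβ.symm h1
      have hins : insert s(x, y) (t'.erase e₂) = t.erase e₂ := by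
        rw [ht', erase_comm']
        exact Finset.insert_erase (hxymem he₂)
      rw [hins] at h2
      have hkey : ∀ z : W', PReach π' (t.erase e₂) z ((cmap α β hαβ z).1) := by
        intro z
        by_cases hz : z = β
        · subst hz
          have hv : (cmap α β hαβ β).1 = α := by simp [cmap]
          rw [hv, hα, hβ]
          exact (preach_of_mem (hxymem he₂)).symm
        · rw [cmap_ne hαβ hz]
          exact PReach.refl
      exact ((hkey a').trans h2).trans (hkey b').symm
    haveI : Nonempty {z : W' // z ≠ β} := ⟨⟨α, hαβ⟩⟩
    have hIH := IH (n - 1) (by omega) π'' t' hn' hcross' hconn' hmin'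
    omega

/-- Existence of a spanning tree of a connected projected graph. -/
lemma exists_tree [Nonempty W] (π : V → W) (E : Finset (Sym2 V))
    (hcross : ∀ x y : V, s(x, y) ∈ E → π x ≠ π y) (hconnE : Conn π E) :
    ∃ t, t ⊆ E ∧ Conn π t ∧ t.card = Fintype.card W - 1 := by
  classical
  have hfam : (E.powerset.filter fun s => Conn π s).Nonempty :=
    ⟨E, Finset.mem_filter.mpr ⟨Finset.mem_powerset.mpr (le_refl _), hconnE⟩⟩
  obtain ⟨t, ht, hmin⟩ := Finset.exists_min_image _ Finset.card hfam
  have htE : t ⊆ E := Finset.mem_powerset.mp (Finset.mem_filter.mp ht).1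
  have htc : Conn π t := (Finset.mem_filter.mp ht).2
  have hminE : ∀ e ∈ t, ¬ Conn π (t.erase e) := by
    intro e he hc
    have hmem : t.erase e ∈ E.powerset.filter fun s => Conn π s :=
      Finset.mem_filter.mpr ⟨Finset.mem_powerset.mpr ((Finset.erase_subset _ _).trans htE), hc⟩
    have h1 := hmin _ hmem
    have h2 : (t.erase e).card = t.card - 1 := Finset.card_erase_of_mem he
    have h3 : 1 ≤ t.card := Finset.card_pos.mpr ⟨e, he⟩
    omega
  have := minimal_conn_card t.card π t rfl (fun x y h => hcross x y (htE h)) htc hminE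
  exact ⟨t, htE, htc, this.symm ▸ rfl⟩

section Weighted

variable (π : V → W) (E : Finset (Sym2 V)) (κ : Sym2 V → ℝ) (c d : V)

/-- Weight of an edge set. -/
noncomputable def wt (t : Finset (Sym2 V)) : ℝ := ∏ e ∈ t, κ e

/-- Spanning trees of the projected multigraph. -/
noncomputable def trees : Finset (Finset (Sym2 V)) :=
  E.powerset.filter fun t => Conn π t ∧ t.card = Fintype.card W - 1

/-- Two-component spanning forests separating `π c` from `π d`. -/
noncomputable def forests : Finset (Finset (Sym2 V)) :=
  E.powerset.filter fun g =>
    (∀ a : W, PReach π g a (π c) ∨ PReach π g a (π d)) ∧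
      ¬ PReach π g (π c) (π d) ∧ g.card = Fintype.card W - 2

noncomputable def NN : ℝ := ∑ t ∈ trees π E, wt κ t

noncomputable def NNf : ℝ :=
  ∑ t ∈ (trees π E).filter (fun t => s(c, d) ∈ t), wt κ t

/-- Forest potential. -/
noncomputable def FF (a : W) : ℝ :=
  ∑ g ∈ (forests π E c d).filter (fun g => PReach π g a (π c)), wt κ g

variable {π E κ c d}

lemma mem_trees {t : Finset (Sym2 V)} :
    t ∈ trees π E ↔ t ⊆ E ∧ Conn π t ∧ t.card = Fintype.card W - 1 := by
  simp [trees, Finset.mem_powerset, and_assoc]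

lemma mem_forests {g : Finset (Sym2 V)} :
    g ∈ forests π E c d ↔ g ⊆ E ∧ (∀ a : W, PReach π g a (π c) ∨ PReach π g a (π d)) ∧
      ¬ PReach π g (π c) (π d) ∧ g.card = Fintype.card W - 2 := by
  simp [forests, Finset.mem_powerset, and_assoc]

/-- The basic tree–forest bijection. -/
lemma sum_trees_eq_forests (hcd : π c ≠ π d) (x y : V) (he : s(x, y) ∈ E) :
    ∑ t ∈ (trees π E).filter (fun t => s(x, y) ∈ t ∧
        PReach π (t.erase s(x, y)) (π x) (π c) ∧ PReach π (t.erase s(x, y)) (π y) (π d)),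
      wt κ t
    = κ s(x, y) *
      ∑ g ∈ (forests π E c d).filter
          (fun g => PReach π g (π x) (π c) ∧ PReach π g (π y) (π d)), wt κ g := by
  have hm2 : 2 ≤ Fintype.card W := Fintype.one_lt_card_iff_nontrivial.mpr ⟨⟨π c, π d, hcd⟩⟩
  rw [Finset.mul_sum]
  refine Finset.sum_nbij' (fun t => t.erase s(x, y)) (fun g => insert s(x, y) g) ?_ ?_ ?_ ?_ ?_
  · -- forward membership
    intro t ht
    have h := Finset.mem_filter.mp ht
    have htT := h.1
    have het := h.2.1
    have hxc := h.2.2.1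
    have hyd := h.2.2.2
    obtain ⟨htE, htc, htcard⟩ := mem_trees.mp htT
    refine Finset.mem_filter.mpr ⟨mem_forests.mpr ⟨(Finset.erase_subset _ _).trans htE, ?_, ?_, ?_⟩, hxc, hyd⟩
    · intro a
      rcases tree_two_sides htc het a with h | h
      · exact Or.inl (h.trans hxc)
      · exact Or.inr (h.trans hyd)
    · intro hcdr
      exact tree_side htc htcard het ((hxc.trans hcdr).trans hyd.symm)
    · rw [Finset.card_erase_of_mem het, htcard]
      omega
  · -- backward membership
    intro g hg
    have h := Finset.mem_filter.mp hg
    have hgF := h.1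
    have hxc := h.2.1
    have hyd := h.2.2
    obtain ⟨hgE, hspan, hsep, hgcard⟩ := mem_forests.mp hgF
    have heg : s(x, y) ∉ g := by
      intro hmem
      exact hsep (hxc.symm.trans ((preach_of_mem hmem).trans hyd))
    have herase : (insert s(x, y) g).erase s(x, y) = g := Finset.erase_insert heg
    have hmono : g ⊆ insert s(x, y) g := Finset.subset_insert _ _
    refine Finset.mem_filter.mpr ⟨mem_trees.mpr ⟨Finset.insert_subset he hgE, ?_, ?_⟩,
      Finset.mem_insert_self _ _, by rw [herase]; exact hxc, by rw [herase]; exact hyd⟩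
    · -- connectivity
      intro a b
      have hcx : PReach π (insert s(x, y) g) (π c) (π d) :=
        ((hxc.symm.mono hmono).trans
          (preach_of_mem (Finset.mem_insert_self _ _))).trans (hyd.mono hmono)
      have key : ∀ a : W, PReach π (insert s(x, y) g) a (π c) := by
        intro a
        rcases hspan a with h | h
        · exact h.mono hmono
        · exact (h.mono hmono).trans hcx.symm
      exact (key a).trans (key b).symm
    · rw [Finset.card_insert_of_notMem heg, hgcard]
      omega
  · -- left inverse
    intro t ht
    exact Finset.insert_erase (Finset.mem_filter.mp ht).2.1
  · -- right inverse
    intro g hg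
    refine Finset.erase_insert ?_
    have h := Finset.mem_filter.mp hg
    have hgF := h.1
    have hxc := h.2.1
    have hyd := h.2.2
    obtain ⟨hgE, hspan, hsep, hgcard⟩ := mem_forests.mp hgF
    intro hmem
    exact hsep (hxc.symm.trans ((preach_of_mem hmem).trans hyd))
  · -- weights
    intro t ht
    have het : s(x, y) ∈ t := (Finset.mem_filter.mp ht).2.1
    rw [wt, wt, ← Finset.mul_prod_erase _ _ het]

/-- Exactly one separating pair at each class: the counting lemma. -/
lemma card_sep_pairs (hcrossE : ∀ x y : V, s(x, y) ∈ E → π x ≠ π y)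
    {t : Finset (Sym2 V)} (ht : t ∈ trees π E) (w₀ w : W) :
    ((Finset.univ ×ˢ Finset.univ : Finset (V × V)).filter fun p =>
        s(p.1, p.2) ∈ t ∧ π p.1 = w ∧ ¬ PReach π (t.erase s(p.1, p.2)) w w₀).card
      = if w = w₀ then 0 else 1 := by
  obtain ⟨htE, htc, htcard⟩ := mem_trees.mp ht
  have hcross : ∀ x y : V, s(x, y) ∈ t → π x ≠ π y := fun x y h => hcrossE x y (htE h)
  set SP : W → Finset (V × V) := fun w =>
    (Finset.univ ×ˢ Finset.univ : Finset (V × V)).filter fun p =>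
      s(p.1, p.2) ∈ t ∧ π p.1 = w ∧ ¬ PReach π (t.erase s(p.1, p.2)) w w₀ with hSP
  by_cases hww : w = w₀
  · subst hww
    rw [if_pos rfl, Finset.card_eq_zero, Finset.filter_eq_empty_iff]
    rintro p _ ⟨_, _, hnr⟩
    exact hnr PReach.refl
  · rw [if_neg hww]
    -- each `SP w` for `w ≠ w₀` is nonempty
    have hpos : ∀ w : W, w ≠ w₀ → 1 ≤ (SP w).card := by
      intro w hw
      obtain ⟨e, het, ⟨x, y, rfl, hx⟩, hnr⟩ :=
        exists_sep_edge t.card π t rfl hcross htc htcard w w₀ hw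
      refine Finset.card_pos.mpr ⟨(x, y), Finset.mem_filter.mpr ⟨Finset.mem_product.mpr
        ⟨Finset.mem_univ _, Finset.mem_univ _⟩, het, hx, ?_⟩⟩
      exact hnr
    -- the union over `w ≠ w₀` maps bijectively to `t`
    have hdisj : ∀ w₁ ∈ Finset.univ.erase w₀, ∀ w₂ ∈ Finset.univ.erase w₀, w₁ ≠ w₂ →
        Disjoint (SP w₁) (SP w₂) := by
      intro w₁ _ w₂ _ hne
      refine Finset.disjoint_left.mpr ?_
      intro p h1 h2
      exact hne (((Finset.mem_filter.mp h1).2.2.1).symm.trans (Finset.mem_filter.mp h2).2.2.1)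
    have hcardsum : ∑ w ∈ Finset.univ.erase w₀, (SP w).card
        = ((Finset.univ.erase w₀).biUnion SP).card := (Finset.card_biUnion hdisj).symm
    have hbij : ((Finset.univ.erase w₀).biUnion SP).card = t.card := by
      refine Finset.card_bij (fun p _ => s(p.1, p.2)) ?_ ?_ ?_
      · intro p hp
        obtain ⟨w', hw', hpw⟩ := Finset.mem_biUnion.mp hp
        exact (Finset.mem_filter.mp hpw).2.1
      · -- injectivity
        intro p hp p' hp' heq0
        have heq : s(p.1, p.2) = s(p'.1, p'.2) := heq0
        obtain ⟨w1, hw1, hpw⟩ := Finset.mem_biUnion.mp hp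
        obtain ⟨w2, hw2, hpw'⟩ := Finset.mem_biUnion.mp hp'
        obtain ⟨het1, hπ1, hnr1⟩ := (Finset.mem_filter.mp hpw).2
        obtain ⟨het2, hπ2, hnr2⟩ := (Finset.mem_filter.mp hpw').2
        rcases Sym2.eq_iff.mp heq with ⟨h1, h2⟩ | ⟨h1, h2⟩
        · exact Prod.ext_iff.mpr ⟨h1, h2⟩
        · -- opposite orientations: contradiction with two sides
          exfalso
          rcases tree_two_sides htc het1 w₀ with h | h
          · exact hnr1 (hπ1 ▸ h.symm)
          · refine hnr2 ?_
            rw [← heq, ← hπ2, ← h2]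
            exact h.symm
      · -- surjectivity
        intro e het
        induction e using Sym2.inductionOn with | _ x y =>
        have h2s := tree_two_sides htc het w₀
        have hnb := fun h1 h2 => tree_not_both_sides htc htcard het w₀ h1 h2
        rcases h2s with h | h
        · -- w₀ on the x side; the pair (y, x) separates
          refine ⟨(y, x), Finset.mem_biUnion.mpr ⟨π y, ?_, ?_⟩, Sym2.eq_swap⟩
          · refine Finset.mem_erase.mpr ⟨?_, Finset.mem_univ _⟩
            intro hy
            exact hnb h (hy ▸ PReach.refl)
          · refine Finset.mem_filter.mpr ⟨Finset.mem_product.mpr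
              ⟨Finset.mem_univ _, Finset.mem_univ _⟩, ?_, rfl, ?_⟩
            · rwa [Sym2.eq_swap]
            · rw [Sym2.eq_swap]
              intro hr
              exact hnb h hr.symm
        · refine ⟨(x, y), Finset.mem_biUnion.mpr ⟨π x, ?_, ?_⟩, rfl⟩
          · refine Finset.mem_erase.mpr ⟨?_, Finset.mem_univ _⟩
            intro hx
            exact hnb (hx ▸ PReach.refl) h
          · exact Finset.mem_filter.mpr ⟨Finset.mem_product.mpr
              ⟨Finset.mem_univ _, Finset.mem_univ _⟩, het, rfl, fun hr => hnb hr.symm h⟩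
    -- conclude: all summands are 1
    have hcards : ∑ w ∈ Finset.univ.erase w₀, (SP w).card = Fintype.card W - 1 := by
      rw [hcardsum, hbij, htcard]
    have hcount : (Finset.univ.erase w₀).card = Fintype.card W - 1 := by
      rw [Finset.card_erase_of_mem (Finset.mem_univ _), Finset.card_univ]
    have hone : ∀ w' ∈ Finset.univ.erase w₀, (SP w').card = 1 := by
      have hsum1 : ∑ w ∈ Finset.univ.erase w₀, 1 = ∑ w ∈ Finset.univ.erase w₀, (SP w).card := by
        rw [Finset.sum_const, smul_eq_mul, mul_one, hcards, hcount]
      have hle : ∀ w' ∈ Finset.univ.erase w₀, 1 ≤ (SP w').card := fun w' hw' =>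
        hpos w' (Finset.mem_erase.mp hw').1
      intro w' hw'
      exact ((Finset.sum_eq_sum_iff_of_le hle).mp hsum1 w' hw').symm
    exact hone w (Finset.mem_erase.mpr ⟨hww, Finset.mem_univ _⟩)

end Weighted

section Conservation

variable (π : V → W) (E : Finset (Sym2 V)) (κ : Sym2 V → ℝ) (c d : V)

/-- Per-tree signed indicator of an oriented edge on the `c`–`d` path. -/
noncomputable def eps (t : Finset (Sym2 V)) (x y : V) : ℝ :=
  (if s(x, y) ∈ t ∧ PReach π (t.erase s(x, y)) (π x) (π c) ∧
      PReach π (t.erase s(x, y)) (π y) (π d) then 1 else 0) -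
  (if s(x, y) ∈ t ∧ PReach π (t.erase s(x, y)) (π y) (π c) ∧
      PReach π (t.erase s(x, y)) (π x) (π d) then 1 else 0)

variable {π E κ c d}

lemma eps_eq {t : Finset (Sym2 V)} (ht : t ∈ trees π E) (x y : V) :
    eps π c d t x y =
      (if s(x, y) ∈ t ∧ ¬ PReach π (t.erase s(x, y)) (π x) (π d) then 1 else 0) -
      (if s(x, y) ∈ t ∧ ¬ PReach π (t.erase s(x, y)) (π x) (π c) then 1 else 0) := by
  obtain ⟨htE, htc, htcard⟩ := mem_trees.mp ht
  rw [eps]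
  by_cases het : s(x, y) ∈ t
  swap
  · simp [het]
  have S1 := tree_two_sides htc het (π c)
  have S3 := tree_two_sides htc het (π d)
  have nb : ∀ {a : W}, PReach π (t.erase s(x, y)) a (π x) →
      PReach π (t.erase s(x, y)) a (π y) → False := fun h1 h2 =>
    tree_not_both_sides htc htcard het _ h1 h2
  by_cases hxc : PReach π (t.erase s(x, y)) (π x) (π c) <;>
    by_cases hxd : PReach π (t.erase s(x, y)) (π x) (π d)
  · -- x side contains both c and d
    have hyc : ¬ PReach π (t.erase s(x, y)) (π y) (π c) := fun h => nb hxc.symm h.symm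
    have hyd : ¬ PReach π (t.erase s(x, y)) (π y) (π d) := fun h => nb hxd.symm h.symm
    simp [het, hxc, hxd, hyc, hyd]
  · have hyd : PReach π (t.erase s(x, y)) (π y) (π d) :=
      (S3.resolve_left (fun h => hxd h.symm)).symm
    have hyc : ¬ PReach π (t.erase s(x, y)) (π y) (π c) := fun h => nb hxc.symm h.symm
    simp [het, hxc, hxd, hyc, hyd]
  · have hyc : PReach π (t.erase s(x, y)) (π y) (π c) :=
      (S1.resolve_left (fun h => hxc h.symm)).symm
    simp [het, hxc, hxd, hyc]
  · have hyc : PReach π (t.erase s(x, y)) (π y) (π c) :=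
      (S1.resolve_left (fun h => hxc h.symm)).symm
    have hyd : PReach π (t.erase s(x, y)) (π y) (π d) :=
      (S3.resolve_left (fun h => hxd h.symm)).symm
    simp [het, hxc, hxd, hyc, hyd]

lemma FF_sub (hcd : π c ≠ π d) (a b : W) :
    FF π E κ c d a - FF π E κ c d b =
      (∑ g ∈ forests π E c d, if PReach π g a (π c) ∧ PReach π g b (π d) then wt κ g else 0) -
      (∑ g ∈ forests π E c d, if PReach π g b (π c) ∧ PReach π g a (π d) then wt κ g else 0) := by
  rw [FF, FF, Finset.sum_filter, Finset.sum_filter, ← Finset.sum_sub_distrib,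
    ← Finset.sum_sub_distrib]
  refine Finset.sum_congr rfl fun g hg => ?_
  obtain ⟨hgE, hspan, hsep, hgcard⟩ := mem_forests.mp hg
  have hxor : ∀ z : W, PReach π g z (π c) → PReach π g z (π d) → False := fun z h1 h2 =>
    hsep (h1.symm.trans h2)
  by_cases hac : PReach π g a (π c) <;> by_cases hbc : PReach π g b (π c)
  · have h1 : ¬ PReach π g b (π d) := fun h => hxor b hbc h
    have h2 : ¬ PReach π g a (π d) := fun h => hxor a hac h
    simp [hac, hbc, h1, h2]
  · have h1 : PReach π g b (π d) := (hspan b).resolve_left hbc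
    have h2 : ¬ PReach π g a (π d) := fun h => hxor a hac h
    simp [hac, hbc, h1, h2]
  · have h1 : PReach π g a (π d) := (hspan a).resolve_left hac
    have h2 : ¬ PReach π g b (π d) := fun h => hxor b hbc h
    simp [hac, hbc, h1, h2]
  · simp [hac, hbc]

/-- Step A: the edge current as a sum over trees. -/
lemma keyA (hcd : π c ≠ π d) (x y : V) :
    (if s(x, y) ∈ E then κ s(x, y) * (FF π E κ c d (π x) - FF π E κ c d (π y)) else 0) =
      ∑ t ∈ trees π E, wt κ t * eps π c d t x y := by
  by_cases he : s(x, y) ∈ E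
  swap
  · rw [if_neg he]
    refine (Finset.sum_eq_zero fun t ht => ?_).symm
    have htE := (mem_trees.mp ht).1
    have het : s(x, y) ∉ t := fun h => he (htE h)
    simp [eps, het]
  have hsw : s(y, x) = s(x, y) := Sym2.eq_swap
  have h1 := sum_trees_eq_forests (κ := κ) hcd x y he
  have h2 := sum_trees_eq_forests (κ := κ) hcd y x (by rwa [hsw])
  rw [hsw] at h2
  rw [if_pos he, FF_sub hcd, mul_sub]
  simp only [eps, mul_sub, mul_ite, mul_one, mul_zero]
  rw [Finset.sum_sub_distrib, ← Finset.sum_filter, ← Finset.sum_filter, ← Finset.sum_filter,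
    ← Finset.sum_filter, h1, h2]

end Conservation

section Conservation2

variable {π : V → W} {E : Finset (Sym2 V)} {κ : Sym2 V → ℝ} {c d : V}

lemma sum_ite_card (P : V → V → Prop) :
    ∑ x : V, ∑ y : V, (if P x y then (1 : ℝ) else 0) =
      (((Finset.univ ×ˢ Finset.univ : Finset (V × V)).filter fun p => P p.1 p.2).card : ℝ) := by
  rw [← Finset.sum_product', Finset.sum_boole]

lemma sum_eps (hcrossE : ∀ x y : V, s(x, y) ∈ E → π x ≠ π y) (hcd : π c ≠ π d)
    {t : Finset (Sym2 V)} (ht : t ∈ trees π E) (w : W) :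
    ∑ x ∈ Finset.univ.filter (fun x => π x = w), ∑ y : V, eps π c d t x y =
      (if w = π c then (1 : ℝ) else 0) - (if w = π d then 1 else 0) := by
  have key : ∀ x : V, (if π x = w then ∑ y : V, eps π c d t x y else 0) =
      ∑ y : V,
        ((if s(x, y) ∈ t ∧ π x = w ∧ ¬ PReach π (t.erase s(x, y)) w (π d) then (1 : ℝ) else 0) -
         (if s(x, y) ∈ t ∧ π x = w ∧ ¬ PReach π (t.erase s(x, y)) w (π c) then (1 : ℝ) else 0)) := by
    intro x
    by_cases h : π x = w
    · rw [if_pos h]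
      refine Finset.sum_congr rfl fun y _ => ?_
      rw [eps_eq ht x y]
      subst h
      congr 1
      · refine if_congr ?_ rfl rfl
        constructor
        · rintro ⟨h1, h2⟩; exact ⟨h1, rfl, h2⟩
        · rintro ⟨h1, _, h2⟩; exact ⟨h1, h2⟩
      · refine if_congr ?_ rfl rfl
        constructor
        · rintro ⟨h1, h2⟩; exact ⟨h1, rfl, h2⟩
        · rintro ⟨h1, _, h2⟩; exact ⟨h1, h2⟩
    · rw [if_neg h]
      refine (Finset.sum_eq_zero fun y _ => ?_).symm
      rw [if_neg (fun hc => h hc.2.1), if_neg (fun hc => h hc.2.1), sub_zero]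
  rw [Finset.sum_filter]
  simp_rw [key, Finset.sum_sub_distrib]
  have conv1 : ∀ w₀ : W,
      (∑ x : V, ∑ y : V,
        if s(x, y) ∈ t ∧ π x = w ∧ ¬ PReach π (t.erase s(x, y)) w w₀ then (1 : ℝ) else 0)
      = (((Finset.univ ×ˢ Finset.univ : Finset (V × V)).filter fun p =>
          s(p.1, p.2) ∈ t ∧ π p.1 = w ∧ ¬ PReach π (t.erase s(p.1, p.2)) w w₀).card : ℝ) := by
    intro w₀
    rw [← Finset.sum_product', Finset.sum_boole]
  rw [conv1, conv1, card_sep_pairs hcrossE ht (π d) w, card_sep_pairs hcrossE ht (π c) w]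
  by_cases h1 : w = π c <;> by_cases h2 : w = π d
  · exact absurd (h1.symm.trans h2) hcd
  · simp [h1, h2, hcd, Ne.symm hcd]
  · simp [h1, h2, hcd, Ne.symm hcd]
  · simp [h1, h2, hcd, Ne.symm hcd]

lemma conservation (hcrossE : ∀ x y : V, s(x, y) ∈ E → π x ≠ π y) (hcd : π c ≠ π d) (w : W) :
    ∑ x ∈ Finset.univ.filter (fun x => π x = w), ∑ y : V,
        (if s(x, y) ∈ E then κ s(x, y) * (FF π E κ c d (π x) - FF π E κ c d (π y)) else 0)
      = ((if w = π c then (1 : ℝ) else 0) - (if w = π d then 1 else 0)) * NN π E κ := by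
  simp_rw [keyA hcd]
  have swap1 : ∀ x : V, ∑ y : V, ∑ t ∈ trees π E, wt κ t * eps π c d t x y =
      ∑ t ∈ trees π E, ∑ y : V, wt κ t * eps π c d t x y := fun x => Finset.sum_comm
  simp_rw [swap1]
  rw [Finset.sum_comm]
  have inner : ∀ t ∈ trees π E,
      ∑ x ∈ Finset.univ.filter (fun x => π x = w), ∑ y : V, wt κ t * eps π c d t x y
        = wt κ t * ((if w = π c then (1 : ℝ) else 0) - (if w = π d then 1 else 0)) := by
    intro t ht
    simp_rw [← Finset.mul_sum]
    rw [sum_eps hcrossE hcd ht w]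
  rw [Finset.sum_congr rfl inner, ← Finset.sum_mul, NN, mul_comm]

end Conservation2

section Flows

variable (π : V → W) (E : Finset (Sym2 V)) (κ : Sym2 V → ℝ) (c d : V)

/-- A unit flow from the class of `c` to the class of `d`, supported on `E`. -/
def IsFlow (j : V → V → ℝ) : Prop :=
  (∀ x y, j x y = - j y x) ∧ (∀ x y, j x y ≠ 0 → s(x, y) ∈ E) ∧
    (∀ w : W, w ≠ π c → w ≠ π d →
      ∑ x ∈ Finset.univ.filter (fun x => π x = w), ∑ y : V, j x y = 0) ∧
    ∑ x ∈ Finset.univ.filter (fun x => π x = π c), ∑ y : V, j x y = 1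

/-- Dirichlet energy of a flow. -/
noncomputable def energy (j : V → V → ℝ) : ℝ :=
  (1/2) * ∑ x : V, ∑ y : V, (j x y)^2 / κ s(x, y)

/-- The tree (equilibrium) flow. -/
noncomputable def theta : V → V → ℝ := fun x y =>
  (if s(x, y) ∈ E then κ s(x, y) * (FF π E κ c d (π x) - FF π E κ c d (π y)) else 0) /
    NN π E κ

variable {π E κ c d}

lemma NN_pos [Nonempty W] (hcrossE : ∀ x y : V, s(x, y) ∈ E → π x ≠ π y)
    (hconnE : Conn π E) (hκ : ∀ e, 0 < κ e) : 0 < NN π E κ := by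
  obtain ⟨t, htE, htc, htcard⟩ := exists_tree π E hcrossE hconnE
  exact Finset.sum_pos (fun t _ => Finset.prod_pos fun e _ => hκ e)
    ⟨t, mem_trees.mpr ⟨htE, htc, htcard⟩⟩

lemma theta_skew (x y : V) : theta π E κ c d x y = - theta π E κ c d y x := by
  have hsw : s(y, x) = s(x, y) := Sym2.eq_swap
  by_cases he : s(x, y) ∈ E
  · simp only [theta, hsw, if_pos he]
    ring
  · simp only [theta, hsw, if_neg he]
    ring

lemma theta_support (x y : V) (h : theta π E κ c d x y ≠ 0) : s(x, y) ∈ E := by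
  by_contra hE
  exact h (by simp [theta, hE])

lemma theta_flow (hcrossE : ∀ x y : V, s(x, y) ∈ E → π x ≠ π y) (hcd : π c ≠ π d)
    (hNN : NN π E κ ≠ 0) : IsFlow π E c d (theta π E κ c d) := by
  refine ⟨theta_skew, theta_support, ?_, ?_⟩
  · intro w hwc hwd
    simp only [theta, ← Finset.sum_div]
    rw [conservation hcrossE hcd w, if_neg hwc, if_neg hwd]
    simp
  · simp only [theta, ← Finset.sum_div]
    rw [conservation hcrossE hcd (π c), if_pos rfl, if_neg hcd]
    field_simp
    norm_num

lemma rows_total {j : V → V → ℝ} (hskew : ∀ x y, j x y = - j y x) :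
    ∑ x : V, ∑ y : V, j x y = 0 := by
  have h1 : ∑ x : V, ∑ y : V, j x y = ∑ x : V, ∑ y : V, j y x := Finset.sum_comm
  have h2 : ∑ x : V, ∑ y : V, (j y x + j x y) = 0 :=
    Finset.sum_eq_zero fun x _ => Finset.sum_eq_zero fun y _ => by rw [hskew x y]; ring
  have h3 : ∑ x : V, ∑ y : V, (j y x + j x y)
      = (∑ x : V, ∑ y : V, j y x) + ∑ x : V, ∑ y : V, j x y := by
    simp_rw [Finset.sum_add_distrib]
  linarith

lemma flow_at_d (hcd : π c ≠ π d) {j : V → V → ℝ} (hj : IsFlow π E c d j) :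
    ∑ x ∈ Finset.univ.filter (fun x => π x = π d), ∑ y : V, j x y = -1 := by
  obtain ⟨hskew, _, hcons, hunit⟩ := hj
  have htot : ∑ w : W, ∑ x ∈ Finset.univ.filter (fun x => π x = w), ∑ y : V, j x y = 0 := by
    rw [Finset.sum_fiberwise Finset.univ π (fun x => ∑ y : V, j x y)]
    exact rows_total hskew
  have hpt : ∀ w ∈ (Finset.univ : Finset W),
      ∑ x ∈ Finset.univ.filter (fun x => π x = w), ∑ y : V, j x y =
      (if w = π c then (1 : ℝ) else 0) +
        (if w = π d then ∑ x ∈ Finset.univ.filter (fun x => π x = π d), ∑ y : V, j x y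
          else 0) := by
    intro w _
    by_cases h1 : w = π c
    · subst h1
      rw [if_pos rfl, if_neg hcd, hunit, add_zero]
    · by_cases h2 : w = π d
      · subst h2
        rw [if_neg h1, if_pos rfl, zero_add]
      · rw [if_neg h1, if_neg h2, add_zero]
        exact hcons w h1 h2
  rw [Finset.sum_congr rfl hpt, Finset.sum_add_distrib, Finset.sum_ite_eq',
    Finset.sum_ite_eq'] at htot
  simp only [Finset.mem_univ, if_pos] at htot
  linarith

lemma parts (hcd : π c ≠ π d) {j : V → V → ℝ} (hj : IsFlow π E c d j) :
    ∑ x : V, ∑ y : V, j x y * (FF π E κ c d (π x) - FF π E κ c d (π y))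
      = 2 * (FF π E κ c d (π c) - FF π E κ c d (π d)) := by
  have hskew := hj.1
  have hcons := hj.2.2.1
  have hunit := hj.2.2.2
  have step1 : ∑ x : V, ∑ y : V, j x y * (FF π E κ c d (π x) - FF π E κ c d (π y))
      = 2 * ∑ x : V, (FF π E κ c d (π x) * ∑ y : V, j x y) := by
    simp_rw [mul_sub, Finset.sum_sub_distrib]
    have hA : ∑ x : V, ∑ y : V, j x y * FF π E κ c d (π x)
        = ∑ x : V, (FF π E κ c d (π x) * ∑ y : V, j x y) := by
      refine Finset.sum_congr rfl fun x _ => ?_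
      rw [Finset.mul_sum]
      exact Finset.sum_congr rfl fun y _ => mul_comm _ _
    have hB : ∑ x : V, ∑ y : V, j x y * FF π E κ c d (π y)
        = - ∑ x : V, (FF π E κ c d (π x) * ∑ y : V, j x y) := by
      rw [Finset.sum_comm, ← Finset.sum_neg_distrib]
      refine Finset.sum_congr rfl fun a _ => ?_
      rw [Finset.mul_sum, ← Finset.sum_neg_distrib]
      refine Finset.sum_congr rfl fun b _ => ?_
      rw [hskew b a]
      ring
    rw [hA, hB]
    ring
  rw [step1]
  -- group by fibers
  have step2 : ∑ x : V, (FF π E κ c d (π x) * ∑ y : V, j x y)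
      = ∑ w : W, (FF π E κ c d w *
          ∑ x ∈ Finset.univ.filter (fun x => π x = w), ∑ y : V, j x y) := by
    rw [← Finset.sum_fiberwise Finset.univ π (fun x => FF π E κ c d (π x) * ∑ y : V, j x y)]
    refine Finset.sum_congr rfl fun w _ => ?_
    rw [Finset.mul_sum]
    refine Finset.sum_congr rfl fun x hx => ?_
    rw [(Finset.mem_filter.mp hx).2]
  rw [step2]
  have hpt : ∀ w ∈ (Finset.univ : Finset W),
      FF π E κ c d w * ∑ x ∈ Finset.univ.filter (fun x => π x = w), ∑ y : V, j x y
        = (if w = π c then FF π E κ c d (π c) else 0) +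
          (if w = π d then - FF π E κ c d (π d) else 0) := by
    intro w _
    by_cases h1 : w = π c
    · subst h1
      rw [hunit, if_pos rfl, if_neg hcd, mul_one, add_zero]
    · by_cases h2 : w = π d
      · subst h2
        rw [flow_at_d hcd hj, if_neg h1, if_pos rfl, zero_add, mul_neg_one]
      · rw [hcons w h1 h2, if_neg h1, if_neg h2, mul_zero, add_zero]
  rw [Finset.sum_congr rfl hpt, Finset.sum_add_distrib, Finset.sum_ite_eq', Finset.sum_ite_eq']
  simp only [Finset.mem_univ, if_pos]
  ring

end Flows

section Energy

variable {π : V → W} {E : Finset (Sym2 V)} {κ : Sym2 V → ℝ} {c d : V}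

lemma FF_at_c : FF π E κ c d (π c) = ∑ g ∈ forests π E c d, wt κ g := by
  rw [FF, Finset.filter_true_of_mem]
  exact fun g _ => PReach.refl

lemma FF_at_d : FF π E κ c d (π d) = 0 := by
  rw [FF, Finset.filter_false_of_mem, Finset.sum_empty]
  intro g hg
  have hsep := (mem_forests.mp hg).2.2.1
  exact fun h => hsep h.symm

lemma NNf_eq (hcd : π c ≠ π d) (hf : s(c, d) ∈ E) :
    NNf π E κ c d = κ s(c, d) * ∑ g ∈ forests π E c d, wt κ g := by
  have h := sum_trees_eq_forests (κ := κ) hcd c d hf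
  have e1 : (trees π E).filter (fun t => s(c, d) ∈ t ∧
      PReach π (t.erase s(c, d)) (π c) (π c) ∧ PReach π (t.erase s(c, d)) (π d) (π d))
      = (trees π E).filter (fun t => s(c, d) ∈ t) :=
    Finset.filter_congr fun t _ => ⟨fun h' => h'.1, fun h' => ⟨h', PReach.refl, PReach.refl⟩⟩
  have e2 : (forests π E c d).filter
      (fun g => PReach π g (π c) (π c) ∧ PReach π g (π d) (π d)) = forests π E c d :=
    Finset.filter_true_of_mem fun g _ => ⟨PReach.refl, PReach.refl⟩
  rw [e1, e2] at h
  exact h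

lemma energy_theta (hcrossE : ∀ x y : V, s(x, y) ∈ E → π x ≠ π y) (hcd : π c ≠ π d)
    (hκ : ∀ e, 0 < κ e) (hNN : 0 < NN π E κ) (hf : s(c, d) ∈ E) (hκf : κ s(c, d) = 1) :
    energy κ (theta π E κ c d) = NNf π E κ c d / NN π E κ := by
  have hθ := theta_flow hcrossE hcd (ne_of_gt hNN)
  have hpt : ∀ x y : V, (theta π E κ c d x y)^2 / κ s(x, y)
      = theta π E κ c d x y * (FF π E κ c d (π x) - FF π E κ c d (π y)) / NN π E κ := by
    intro x y
    by_cases he : s(x, y) ∈ E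
    · simp only [theta, if_pos he]
      have h0 : κ s(x, y) ≠ 0 := ne_of_gt (hκ _)
      have h1 : NN π E κ ≠ 0 := ne_of_gt hNN
      field_simp
    · simp [theta, he]
  rw [energy]
  simp_rw [hpt, ← Finset.sum_div]
  rw [parts hcd hθ, FF_at_c, FF_at_d, NNf_eq hcd hf, hκf]
  ring

lemma energy_ge (hcrossE : ∀ x y : V, s(x, y) ∈ E → π x ≠ π y) (hcd : π c ≠ π d)
    (hκ : ∀ e, 0 < κ e) (hNN : 0 < NN π E κ) (hf : s(c, d) ∈ E) (hκf : κ s(c, d) = 1)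
    {j : V → V → ℝ} (hj : IsFlow π E c d j) :
    NNf π E κ c d / NN π E κ ≤ energy κ j := by
  have hθ := theta_flow hcrossE hcd (ne_of_gt hNN)
  set Φ : V → V → ℝ := fun x y => (FF π E κ c d (π x) - FF π E κ c d (π y)) / NN π E κ
    with hΦ
  set R : ℝ := NNf π E κ c d / NN π E κ with hR
  have hθval : ∀ x y : V, s(x, y) ∈ E → theta π E κ c d x y = κ s(x, y) * Φ x y := by
    intro x y he
    simp only [theta, if_pos he, hΦ]
    ring
  have hpt : ∀ x y : V,
      (if s(x, y) ∈ E then 2 * (j x y * Φ x y) - (theta π E κ c d x y)^2 / κ s(x, y) else 0)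
        ≤ (j x y)^2 / κ s(x, y) := by
    intro x y
    by_cases he : s(x, y) ∈ E
    · rw [if_pos he, hθval x y he]
      have hκ0 : (0 : ℝ) < κ s(x, y) := hκ _
      have key : (j x y)^2 / κ s(x, y) -
          (2 * (j x y * Φ x y) - (κ s(x, y) * Φ x y)^2 / κ s(x, y))
          = (j x y - κ s(x, y) * Φ x y)^2 / κ s(x, y) := by
        field_simp
        ring
      have hnn : 0 ≤ (j x y - κ s(x, y) * Φ x y)^2 / κ s(x, y) :=
        div_nonneg (sq_nonneg _) hκ0.le
      linarith
    · rw [if_neg he]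
      exact div_nonneg (sq_nonneg _) (hκ _).le
  have hjΦ : ∀ x y : V, (if s(x, y) ∈ E then j x y * Φ x y else 0) = j x y * Φ x y := by
    intro x y
    by_cases he : s(x, y) ∈ E
    · rw [if_pos he]
    · rw [if_neg he]
      have h0 : j x y = 0 := by
        by_contra hne
        exact he (hj.2.1 x y hne)
      rw [h0, zero_mul]
  have hθΦ : ∀ x y : V, (if s(x, y) ∈ E then (theta π E κ c d x y)^2 / κ s(x, y) else 0)
      = (theta π E κ c d x y)^2 / κ s(x, y) := by
    intro x y
    by_cases he : s(x, y) ∈ E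
    · rw [if_pos he]
    · rw [if_neg he]
      simp [theta, he]
  -- sum of pointwise bound
  have hsum : ∑ x : V, ∑ y : V,
      (if s(x, y) ∈ E then 2 * (j x y * Φ x y) - (theta π E κ c d x y)^2 / κ s(x, y) else 0)
        ≤ ∑ x : V, ∑ y : V, (j x y)^2 / κ s(x, y) :=
    Finset.sum_le_sum fun x _ => Finset.sum_le_sum fun y _ => hpt x y
  -- identify the left side
  have hsplit : ∀ x y : V,
      (if s(x, y) ∈ E then 2 * (j x y * Φ x y) - (theta π E κ c d x y)^2 / κ s(x, y) else 0)
      = 2 * (if s(x, y) ∈ E then j x y * Φ x y else 0) -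
        (if s(x, y) ∈ E then (theta π E κ c d x y)^2 / κ s(x, y) else 0) := by
    intro x y
    by_cases he : s(x, y) ∈ E
    · rw [if_pos he, if_pos he, if_pos he]
    · rw [if_neg he, if_neg he, if_neg he]
      ring
  have hA : ∑ x : V, ∑ y : V, j x y * Φ x y = 2 * R := by
    simp_rw [hΦ, ← mul_div_assoc, ← Finset.sum_div]
    rw [parts hcd hj, FF_at_c, FF_at_d, hR, NNf_eq hcd hf, hκf]
    ring
  have hB : ∑ x : V, ∑ y : V, (theta π E κ c d x y)^2 / κ s(x, y) = 2 * R := by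
    have := energy_theta hcrossE hcd hκ hNN hf hκf
    rw [energy] at this
    rw [hR, ← this]
    ring
  simp_rw [hsplit, Finset.sum_sub_distrib, ← Finset.mul_sum, hjΦ, hθΦ] at hsum
  rw [hA, hB] at hsum
  rw [energy]
  linarith

end Energy

section Helpers

variable {π : V → W} {E : Finset (Sym2 V)} {κ : Sym2 V → ℝ} {c d : V}

lemma skew_sum_zero {j : V → V → ℝ} (hskew : ∀ x y, j x y = - j y x) (s : Finset V) :
    ∑ x ∈ s, ∑ y ∈ s, j x y = 0 := by
  have h1 : ∑ x ∈ s, ∑ y ∈ s, j x y = ∑ x ∈ s, ∑ y ∈ s, j y x := Finset.sum_comm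
  have h2 : ∑ x ∈ s, ∑ y ∈ s, (j y x + j x y) = 0 :=
    Finset.sum_eq_zero fun x _ => Finset.sum_eq_zero fun y _ => by rw [hskew x y]; ring
  have h3 : ∑ x ∈ s, ∑ y ∈ s, (j y x + j x y)
      = (∑ x ∈ s, ∑ y ∈ s, j y x) + ∑ x ∈ s, ∑ y ∈ s, j x y := by
    simp_rw [Finset.sum_add_distrib]
  linarith

lemma NN_update {q : ℝ} {f : Sym2 V} (hf : f = s(c, d)) (hκf : κ f = 1) :
    NN π E (Function.update κ f q) = NN π E κ + (q - 1) * NNf π E κ c d := by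
  subst hf
  simp only [NN, NNf]
  rw [← Finset.sum_filter_add_sum_filter_not (trees π E) (fun t => s(c, d) ∈ t)
    (wt (Function.update κ s(c, d) q))]
  rw [show (∑ t ∈ trees π E, wt κ t) =
    (∑ t ∈ (trees π E).filter (fun t => s(c, d) ∈ t), wt κ t) +
      ∑ t ∈ (trees π E).filter (fun t => ¬ s(c, d) ∈ t), wt κ t from
    (Finset.sum_filter_add_sum_filter_not (trees π E) (fun t => s(c, d) ∈ t) (wt κ)).symm]
  have h1 : ∀ t ∈ (trees π E).filter (fun t => s(c, d) ∈ t),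
      wt (Function.update κ s(c, d) q) t = q * wt κ t := by
    intro t ht
    have hmem : s(c, d) ∈ t := (Finset.mem_filter.mp ht).2
    rw [wt, Finset.prod_update_of_mem hmem, wt, ← Finset.mul_prod_erase _ _ hmem, hκf, one_mul,
      Finset.sdiff_singleton_eq_erase]
  have h2 : ∀ t ∈ (trees π E).filter (fun t => s(c, d) ∉ t),
      wt (Function.update κ s(c, d) q) t = wt κ t := by
    intro t ht
    have hmem : s(c, d) ∉ t := (Finset.mem_filter.mp ht).2
    rw [wt, wt]
    refine Finset.prod_congr rfl fun e he => ?_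
    exact Function.update_of_ne (fun h => hmem (by rwa [h] at he)) _ _
  rw [Finset.sum_congr rfl h1, Finset.sum_congr rfl h2, ← Finset.mul_sum]
  ring

lemma ratio_helper {a b S1 S2 Sf1 Sf2 q : ℝ} (ha : 0 < a) (hb : 0 < b)
    (hS1 : 0 < S1) (hS2 : 0 < S2) (hq : 1 ≤ q) (hP : Sf1 / S1 ≤ Sf2 / S2) :
    (a * (S1 + (q - 1) * Sf1)) / (a * S1) ≤ (b * (S2 + (q - 1) * Sf2)) / (b * S2) := by
  rw [mul_div_mul_left _ _ (ne_of_gt ha), mul_div_mul_left _ _ (ne_of_gt hb)]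
  rw [add_div, add_div, div_self (ne_of_gt hS1), div_self (ne_of_gt hS2),
    mul_div_assoc, mul_div_assoc]
  have : (q - 1) * (Sf1 / S1) ≤ (q - 1) * (Sf2 / S2) :=
    mul_le_mul_of_nonneg_left hP (by linarith)
  linarith

omit [Fintype W] [DecidableEq W] in
lemma reach_fromEdgeSet_iff {s : Set (Sym2 V)} (hs : ∀ u : V, s(u, u) ∉ s) {x y : V} :
    (SimpleGraph.fromEdgeSet s).Reachable x y ↔
      Relation.ReflTransGen (fun u v => s(u, v) ∈ s) x y := by
  rw [SimpleGraph.reachable_iff_reflTransGen]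
  constructor
  · refine Relation.ReflTransGen.mono ?_ _ _
    intro u v huv
    exact ((SimpleGraph.fromEdgeSet_adj s).mp huv).1
  · refine Relation.ReflTransGen.mono ?_ _ _
    intro u v huv
    refine (SimpleGraph.fromEdgeSet_adj s).mpr ⟨huv, ?_⟩
    intro h
    exact hs v (by rwa [h] at huv)

end Helpers

section Apply

open SimpleGraph

variable {G : SimpleGraph V}

/-- Edge finset of a simple graph (as a filter). -/
noncomputable def EG (G : SimpleGraph V) : Finset (Sym2 V) :=
  Finset.univ.filter (· ∈ G.edgeSet)

lemma mem_EG {e : Sym2 V} : e ∈ EG G ↔ e ∈ G.edgeSet := by simp [EG]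

lemma coe_EG : (↑(EG G) : Set (Sym2 V)) = G.edgeSet := by
  ext e; simp [EG]

lemma EG_nodiag {t : Finset (Sym2 V)} (ht : ↑t ⊆ G.edgeSet) (u : V) :
    s(u, u) ∉ (↑t : Set (Sym2 V)) := by
  intro h
  exact G.irrefl (ht h)

lemma cross_EG {x y : V} (h : s(x, y) ∈ EG G) : (id x : V) ≠ id y :=
  G.ne_of_adj (mem_EG.mp h)

/-- Reachability in `fromEdgeSet` vs `PReach id`. -/
lemma preach_id_iff {t : Finset (Sym2 V)} (ht : ↑t ⊆ G.edgeSet) {x y : V} :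
    (fromEdgeSet (↑t : Set (Sym2 V))).Reachable x y ↔ PReach (id : V → V) t x y := by
  rw [reach_fromEdgeSet_iff (EG_nodiag ht)]
  constructor
  · refine Relation.ReflTransGen.mono (fun u v h => ?_) _ _
    exact ⟨u, v, by simpa using h, rfl, rfl⟩
  · refine Relation.ReflTransGen.mono (fun u v h => ?_) _ _
    obtain ⟨p, r, hpr, hp, hr⟩ := h
    simp only [id] at hp hr
    subst hp; subst hr
    simpa using hpr

lemma conn_id_iff [Nonempty V] {t : Finset (Sym2 V)} (ht : ↑t ⊆ G.edgeSet) :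
    (fromEdgeSet (↑t : Set (Sym2 V))).Connected ↔ Conn (id : V → V) t := by
  rw [connected_iff]
  constructor
  · rintro ⟨hpre, _⟩ a b
    exact (preach_id_iff ht).mp (hpre a b)
  · intro h
    exact ⟨fun a b => (preach_id_iff ht).mpr (h a b), ‹_›⟩

lemma treesG_eq [Nonempty V] : spanningTrees G = trees (id : V → V) (EG G) := by
  ext t
  rw [spanningTrees, Finset.mem_filter, mem_trees]
  constructor
  · rintro ⟨_, h1, h2, h3⟩
    exact ⟨fun e he => mem_EG.mpr (h1 he), (conn_id_iff h1).mp h2, h3⟩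
  · rintro ⟨h1, h2, h3⟩
    have h1' : ↑t ⊆ G.edgeSet := fun e he => mem_EG.mp (h1 he)
    exact ⟨Finset.mem_univ _, h1', (conn_id_iff h1').mpr h2, h3⟩

lemma connE_G (hG : G.Connected) : Conn (id : V → V) (EG G) := by
  haveI : Nonempty V := hG.nonempty
  refine (conn_id_iff (by rw [coe_EG])).mp ?_
  rw [coe_EG, fromEdgeSet_edgeSet]
  exact hG

-- ### the subgraph network

variable {H : G.Subgraph} {c : V}

/-- Class map onto the vertex set of `H` (junk vertices go to the basepoint). -/
noncomputable def piH (H : G.Subgraph) (c : V) (hc : c ∈ H.verts) : V → ↥H.verts :=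
  fun v => if h : v ∈ H.verts then ⟨v, h⟩ else ⟨c, hc⟩

lemma piH_mem {hc : c ∈ H.verts} {v : V} (hv : v ∈ H.verts) : piH H c hc v = ⟨v, hv⟩ := by
  simp [piH, hv]

noncomputable def EH (H : G.Subgraph) : Finset (Sym2 V) :=
  Finset.univ.filter (· ∈ H.edgeSet)

lemma mem_EH {e : Sym2 V} : e ∈ EH H ↔ e ∈ H.edgeSet := by simp [EH]

lemma EH_nodiag {t : Finset (Sym2 V)} (ht : ↑t ⊆ H.edgeSet) (u : V) :
    s(u, u) ∉ (↑t : Set (Sym2 V)) := by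
  intro h
  exact G.irrefl (H.adj_sub (Subgraph.mem_edgeSet.mp (ht h)))

lemma cross_EH {hc : c ∈ H.verts} {x y : V} (h : s(x, y) ∈ EH H) :
    piH H c hc x ≠ piH H c hc y := by
  have hadj := Subgraph.mem_edgeSet.mp (mem_EH.mp h)
  have hx := H.edge_vert hadj
  have hy := H.edge_vert hadj.symm
  rw [piH_mem hx, piH_mem hy]
  intro hcon
  exact G.ne_of_adj (H.adj_sub hadj) (by simpa using hcon)

lemma preachH_to {hc : c ∈ H.verts} {t : Finset (Sym2 V)} (ht : ↑t ⊆ H.edgeSet)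
    {a b : ↥H.verts} (h : PReach (piH H c hc) t a b) :
    ∀ x, x ∈ H.verts → piH H c hc x = a → ∀ y, y ∈ H.verts → piH H c hc y = b →
      (fromEdgeSet (↑t : Set (Sym2 V))).Reachable x y := by
  induction h with
  | refl =>
    intro x hx hxa y hy hyb
    rw [piH_mem hx] at hxa
    rw [piH_mem hy] at hyb
    have hxy : x = y := by
      have := hxa.trans hyb.symm
      simpa using this
    exact hxy ▸ Reachable.refl x
  | tail hmid step ih =>
    rename_i m b'
    obtain ⟨u, v, huv, hu, hv⟩ := step
    have hadj := Subgraph.mem_edgeSet.mp (ht huv)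
    have hu' := H.edge_vert hadj
    have hv' := H.edge_vert hadj.symm
    intro x hx hxa y hy hyb
    have h1 : (fromEdgeSet (↑t : Set (Sym2 V))).Reachable x u := ih x hx hxa u hu' hu
    have h2 : (fromEdgeSet (↑t : Set (Sym2 V))).Adj u v := by
      refine (fromEdgeSet_adj _).mpr ⟨huv, ?_⟩
      exact G.ne_of_adj (H.adj_sub hadj)
    have h3 : v = y := by
      rw [piH_mem hv'] at hv
      rw [piH_mem hy] at hyb
      have := hv.trans hyb.symm
      simpa using this
    exact (h1.trans h2.reachable).trans (h3 ▸ Reachable.refl v)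

lemma connH_iff {hc : c ∈ H.verts} {t : Finset (Sym2 V)} (ht : ↑t ⊆ H.edgeSet) :
    (∀ x ∈ H.verts, ∀ y ∈ H.verts, (fromEdgeSet (↑t : Set (Sym2 V))).Reachable x y)
      ↔ Conn (piH H c hc) t := by
  constructor
  · intro h a b
    obtain ⟨x, hx⟩ := a
    obtain ⟨y, hy⟩ := b
    have hreach := h x hx y hy
    rw [reach_fromEdgeSet_iff (EH_nodiag ht)] at hreach
    have := Relation.ReflTransGen.lift (p := pstep (piH H c hc) t) (piH H c hc)
      (fun u v (huv : s(u, v) ∈ (↑t : Set (Sym2 V))) =>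
        ⟨u, v, by simpa using huv, rfl, rfl⟩) _ _ hreach
    rwa [Function.onFun, piH_mem hx, piH_mem hy] at this
  · intro h x hx y hy
    exact preachH_to ht (h (piH H c hc x) (piH H c hc y)) x hx rfl y hy rfl

lemma treesH_eq (hc : c ∈ H.verts) :
    subSpanningTrees G H = trees (piH H c hc) (EH H) := by
  ext t
  rw [subSpanningTrees, Finset.mem_filter, mem_trees]
  have hcard : Nat.card H.verts = Fintype.card ↥H.verts := Nat.card_eq_fintype_card
  constructor
  · rintro ⟨_, h1, h2, h3⟩
    exact ⟨fun e he => mem_EH.mpr (h1 he), (connH_iff h1).mp h2, by rw [← hcard]; exact h3⟩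
  · rintro ⟨h1, h2, h3⟩
    have h1' : ↑t ⊆ H.edgeSet := fun e he => mem_EH.mp (h1 he)
    exact ⟨Finset.mem_univ _, h1', (connH_iff h1').mpr h2, by rw [hcard]; exact h3⟩

lemma connE_H (hH : H.Connected) (hc : c ∈ H.verts) : Conn (piH H c hc) (EH H) := by
  intro a b
  obtain ⟨hpre, _⟩ := Subgraph.connected_iff.mp hH
  have hreach : H.coe.Reachable ⟨a.1, a.2⟩ ⟨b.1, b.2⟩ := hpre _ _
  rw [reachable_iff_reflTransGen] at hreach
  have hlift := Relation.ReflTransGen.lift (p := pstep (piH H c hc) (EH H))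
    (fun z : ↥H.verts => piH H c hc z.1)
    (fun u v huv => ⟨u.1, v.1, mem_EH.mpr (Subgraph.mem_edgeSet.mpr (by
        rwa [Subgraph.coe_adj] at huv)), rfl, rfl⟩) _ _ hreach
  simp only [Function.onFun] at hlift
  rw [piH_mem a.2, piH_mem b.2] at hlift
  exact hlift

/-- A flow on the subgraph network is a flow on the ambient network. -/
lemma flow_H_to_G {hc : c ∈ H.verts} {d : V} {j : V → V → ℝ}
    (hj : IsFlow (piH H c hc) (EH H) c d j) (hd : d ∈ H.verts) (hcd : c ≠ d) :
    IsFlow (id : V → V) (EG G) c d j := by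
  obtain ⟨hskew, hsupp, hcons, hunit⟩ := hj
  have hsupp' : ∀ x y, j x y ≠ 0 → s(x, y) ∈ EG G := fun x y h =>
    mem_EG.mpr (H.edgeSet_subset (mem_EH.mp (hsupp x y h)))
  have hrow0 : ∀ x, x ∉ H.verts → ∀ y, j x y = 0 := by
    intro x hx y
    by_contra hne
    exact hx (H.edge_vert (Subgraph.mem_edgeSet.mp (mem_EH.mp (hsupp x y hne))))
  have hfib : ∀ w : V, Finset.univ.filter (fun x => (id x : V) = w) = {w} := by
    intro w
    ext x
    simp
  have hfibH : ∀ w (hw : w ∈ H.verts), w ≠ c →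
      Finset.univ.filter (fun x => piH H c hc x = (⟨w, hw⟩ : ↥H.verts)) = {w} := by
    intro w hw hwc
    ext x
    simp only [Finset.mem_filter, Finset.mem_univ, true_and, Finset.mem_singleton]
    constructor
    · intro hx
      by_cases h : x ∈ H.verts
      · rw [piH_mem h] at hx
        simpa using hx
      · rw [piH, dif_neg h] at hx
        exact absurd (by simpa using hx.symm) hwc
    · rintro rfl
      exact piH_mem hw
  refine ⟨hskew, hsupp', ?_, ?_⟩
  · intro w hwc hwd
    rw [hfib w, Finset.sum_singleton]
    by_cases hw : w ∈ H.verts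
    · have := hcons ⟨w, hw⟩ (by
        rw [piH_mem hc]; intro h; exact hwc (by simpa using h))
        (by
        rw [piH_mem hd]; intro h; exact hwd (by simpa using h))
      rwa [hfibH w hw (by simpa using hwc), Finset.sum_singleton] at this
    · exact Finset.sum_eq_zero fun y _ => hrow0 w hw y
  · rw [hfib (id c), Finset.sum_singleton]
    show (∑ y : V, j c y) = 1
    have hsub : ({c} : Finset V) ⊆ Finset.univ.filter (fun x => piH H c hc x = piH H c hc c) := by
      intro x hx
      rw [Finset.mem_singleton] at hx
      subst hx
      simp
    have hzero : ∀ x ∈ Finset.univ.filter (fun x => piH H c hc x = piH H c hc c),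
        x ∉ ({c} : Finset V) → ∑ y : V, j x y = 0 := by
      intro x hxf hxs
      rw [Finset.mem_singleton] at hxs
      refine Finset.sum_eq_zero fun y _ => hrow0 x ?_ y
      intro hmem
      have h2 := (Finset.mem_filter.mp hxf).2
      rw [piH_mem hmem, piH_mem hc] at h2
      exact hxs (by simpa using h2)
    have hfull := Finset.sum_subset hsub hzero
    rw [Finset.sum_singleton] at hfull
    rw [hfull]
    exact hunit

end Apply

section ApplyF

open SimpleGraph

variable {G : SimpleGraph V} (F : Finset (Sym2 V))
variable [Fintype (fromEdgeSet (↑F : Set (Sym2 V))).ConnectedComponent]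
variable [DecidableEq (fromEdgeSet (↑F : Set (Sym2 V))).ConnectedComponent]

/-- Class map onto `F`-components. -/
noncomputable def piF : V → (fromEdgeSet (↑F : Set (Sym2 V))).ConnectedComponent :=
  (fromEdgeSet (↑F : Set (Sym2 V))).connectedComponentMk

/-- Crossing edges of `G` with respect to the `F`-components. -/
noncomputable def EF (G : SimpleGraph V) (F : Finset (Sym2 V)) : Finset (Sym2 V) :=
  Finset.univ.filter (fun e => e ∈ G.edgeSet ∧
    ∀ x y : V, e = s(x, y) → ¬ (fromEdgeSet (↑F : Set (Sym2 V))).Reachable x y)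

variable {F}

lemma mem_EF {e : Sym2 V} : e ∈ EF G F ↔ e ∈ G.edgeSet ∧
    ∀ x y : V, e = s(x, y) → ¬ (fromEdgeSet (↑F : Set (Sym2 V))).Reachable x y := by
  simp [EF]

lemma piF_eq_iff {x y : V} :
    piF F x = piF F y ↔ (fromEdgeSet (↑F : Set (Sym2 V))).Reachable x y :=
  ConnectedComponent.eq

lemma cross_EF {x y : V} (h : s(x, y) ∈ EF G F) : piF F x ≠ piF F y := by
  intro hc
  exact (mem_EF.mp h).2 x y rfl (piF_eq_iff.mp hc)

lemma preachF_to {t : Finset (Sym2 V)}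
    (htcross : ∀ x y : V, s(x, y) ∈ t → ¬ (fromEdgeSet (↑F : Set (Sym2 V))).Reachable x y)
    {a b : (fromEdgeSet (↑F : Set (Sym2 V))).ConnectedComponent}
    (h : PReach (piF F) t a b) :
    ∀ x, piF F x = a → ∀ y, piF F y = b →
      (fromEdgeSet ((↑t : Set (Sym2 V)) ∪ ↑F)).Reachable x y := by
  have hmono : fromEdgeSet (↑F : Set (Sym2 V)) ≤ fromEdgeSet ((↑t : Set (Sym2 V)) ∪ ↑F) :=
    fromEdgeSet_mono fun e he => Or.inr he
  induction h with
  | refl =>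
    intro x hx y hy
    exact Reachable.mono hmono (piF_eq_iff.mp (hx.trans hy.symm))
  | tail hmid step ih =>
    obtain ⟨u, v, huv, hu, hv⟩ := step
    intro x hx y hy
    have h1 := ih x hx u hu
    have hne : u ≠ v := fun h => htcross u v huv (h ▸ Reachable.refl _)
    have h2 : (fromEdgeSet ((↑t : Set (Sym2 V)) ∪ ↑F)).Adj u v :=
      (fromEdgeSet_adj _).mpr ⟨Or.inl (by simpa using huv), hne⟩
    have h3 : (fromEdgeSet ((↑t : Set (Sym2 V)) ∪ ↑F)).Reachable v y :=
      Reachable.mono hmono (piF_eq_iff.mp (hv.trans hy.symm))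
    exact (h1.trans h2.reachable).trans h3

lemma connF_iff [Nonempty V] (hF : ↑F ⊆ G.edgeSet) {t : Finset (Sym2 V)}
    (htE : ↑t ⊆ G.edgeSet)
    (htcross : ∀ x y : V, s(x, y) ∈ t → ¬ (fromEdgeSet (↑F : Set (Sym2 V))).Reachable x y) :
    (fromEdgeSet ((↑t : Set (Sym2 V)) ∪ ↑F)).Connected ↔ Conn (piF F) t := by
  constructor
  · intro hconn a b
    induction a using ConnectedComponent.ind with | _ x =>
    induction b using ConnectedComponent.ind with | _ y =>
    have hreach := hconn.preconnected x y
    rw [reachable_iff_reflTransGen] at hreach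
    have key : ∀ {u v : V}, Relation.ReflTransGen (fromEdgeSet ((↑t : Set (Sym2 V)) ∪ ↑F)).Adj u v →
        PReach (piF F) t (piF F u) (piF F v) := by
      intro u v hr
      induction hr with
      | refl => exact PReach.refl
      | tail hmid step ih =>
        rename_i p r
        obtain ⟨hmem, hne⟩ := (fromEdgeSet_adj _).mp step
        rcases hmem with hmem | hmem
        · exact ih.tail ⟨p, r, by simpa using hmem, rfl, rfl⟩
        · have : piF F p = piF F r := piF_eq_iff.mpr
            (((fromEdgeSet_adj _).mpr ⟨hmem, hne⟩ :
              (fromEdgeSet (↑F : Set (Sym2 V))).Adj p r).reachable)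
          exact this ▸ ih
    exact key hreach
  · intro h
    rw [connected_iff]
    exact ⟨fun x y => preachF_to htcross (h (piF F x) (piF F y)) x rfl y rfl, ‹_›⟩

lemma treesF_eq [Nonempty V] (hF : ↑F ⊆ G.edgeSet) :
    contractedSpanningTrees G F = trees (piF F) (EF G F) := by
  ext t
  rw [contractedSpanningTrees, Finset.mem_filter, mem_trees]
  have hcard : Nat.card (fromEdgeSet (↑F : Set (Sym2 V))).ConnectedComponent
      = Fintype.card (fromEdgeSet (↑F : Set (Sym2 V))).ConnectedComponent :=
    Nat.card_eq_fintype_card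
  constructor
  · rintro ⟨_, h1, h2, h3, h4, h5⟩
    refine ⟨?_, ?_, ?_⟩
    · intro e he
      exact mem_EF.mpr ⟨h1 he, fun x y hxy => h3 x y (hxy ▸ he)⟩
    · exact (connF_iff hF h1 h3).mp h4
    · rw [← hcard]; exact h5
  · rintro ⟨h1, h2, h3⟩
    have htE : ↑t ⊆ G.edgeSet := fun e he => (mem_EF.mp (h1 he)).1
    have htcross : ∀ x y : V, s(x, y) ∈ t →
        ¬ (fromEdgeSet (↑F : Set (Sym2 V))).Reachable x y :=
      fun x y he => (mem_EF.mp (h1 he)).2 x y rfl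
    refine ⟨Finset.mem_univ _, htE, ?_, htcross, (connF_iff hF htE htcross).mpr h2,
      by rw [hcard]; exact h3⟩
    · intro e het heF
      induction e using Sym2.inductionOn with | _ u v =>
      have hne : u ≠ v := G.ne_of_adj (hF heF)
      have : (fromEdgeSet (↑F : Set (Sym2 V))).Adj u v :=
        (fromEdgeSet_adj _).mpr ⟨by simpa using heF, hne⟩
      exact htcross u v het this.reachable

lemma connE_F (hG : G.Connected) (hF : ↑F ⊆ G.edgeSet) : Conn (piF F) (EF G F) := by
  intro a b
  induction a using ConnectedComponent.ind with | _ x =>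
  induction b using ConnectedComponent.ind with | _ y =>
  have hreach := hG.preconnected x y
  rw [reachable_iff_reflTransGen] at hreach
  have key : ∀ {u v : V}, Relation.ReflTransGen G.Adj u v →
      PReach (piF F) (EF G F) (piF F u) (piF F v) := by
    intro u v hr
    induction hr with
    | refl => exact PReach.refl
    | tail hmid step ih =>
      rename_i p r
      by_cases hcr : piF F p = piF F r
      · exact hcr ▸ ih
      · refine ih.tail ⟨p, r, mem_EF.mpr ⟨(G.mem_edgeSet).mpr step, ?_⟩, rfl, rfl⟩
        intro x' y' hxy hr
        rcases Sym2.eq_iff.mp hxy with ⟨h1, h2⟩ | ⟨h1, h2⟩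
        · subst h1; subst h2
          exact hcr (piF_eq_iff.mpr hr)
        · subst h1; subst h2
          exact hcr (piF_eq_iff.mpr hr.symm)
  exact key hreach

end ApplyF

section ApplyF2

open SimpleGraph

variable {G : SimpleGraph V} {F : Finset (Sym2 V)}
variable [Fintype (fromEdgeSet (↑F : Set (Sym2 V))).ConnectedComponent]
variable [DecidableEq (fromEdgeSet (↑F : Set (Sym2 V))).ConnectedComponent]

/-- The contracted flow: kill intra-class currents. -/
noncomputable def jF (F : Finset (Sym2 V)) (j : V → V → ℝ) : V → V → ℝ :=
  fun x y => if piF F x = piF F y then 0 else j x y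

variable {c d : V} {j : V → V → ℝ} {κ : Sym2 V → ℝ}

lemma flow_G_to_F (hj : IsFlow (id : V → V) (EG G) c d j) (hcdF : piF F c ≠ piF F d) :
    IsFlow (piF F) (EF G F) c d (jF F j) := by
  obtain ⟨hskew, hsupp, hcons, hunit⟩ := hj
  have hrow : ∀ x : V, x ≠ c → x ≠ d → ∑ y : V, j x y = 0 := by
    intro x hxc hxd
    have h := hcons x (by simpa using hxc) (by simpa using hxd)
    have hfib : Finset.univ.filter (fun z => (id z : V) = x) = {x} := by ext z; simp
    rwa [hfib, Finset.sum_singleton] at h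
  have hrowc : ∑ y : V, j c y = 1 := by
    have hfib : Finset.univ.filter (fun z => (id z : V) = id c) = {c} := by ext z; simp
    rwa [hfib, Finset.sum_singleton] at hunit
  have hsplit : ∀ (ω) (x : V), piF F x = ω →
      ∑ y : V, jF F j x y
        = (∑ y : V, j x y) - ∑ y ∈ Finset.univ.filter (fun y => piF F y = ω), j x y := by
    intro ω x hx
    rw [Finset.sum_filter, ← Finset.sum_sub_distrib]
    refine Finset.sum_congr rfl fun y _ => ?_
    simp only [jF]
    by_cases h : piF F y = ω
    · rw [if_pos h, if_pos (hx.trans h.symm), sub_self]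
    · rw [if_neg h, if_neg (fun hh : piF F x = piF F y => h (hh.symm.trans hx)), sub_zero]
  refine ⟨?_, ?_, ?_, ?_⟩
  · intro x y
    simp only [jF]
    by_cases h : piF F x = piF F y
    · rw [if_pos h, if_pos h.symm, neg_zero]
    · rw [if_neg h, if_neg (fun hh => h hh.symm)]
      exact hskew x y
  · intro x y hne
    simp only [jF] at hne
    by_cases h : piF F x = piF F y
    · rw [if_pos h] at hne
      exact absurd rfl hne
    · rw [if_neg h] at hne
      refine mem_EF.mpr ⟨mem_EG.mp (hsupp x y hne), ?_⟩
      intro x' y' hxy hr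
      rcases Sym2.eq_iff.mp hxy with ⟨h1, h2⟩ | ⟨h1, h2⟩
      · subst h1; subst h2; exact h (piF_eq_iff.mpr hr)
      · subst h1; subst h2; exact h (piF_eq_iff.mpr hr.symm)
  · intro ω hωc hωd
    have hcong : ∀ x ∈ Finset.univ.filter (fun x => piF F x = ω), ∑ y : V, jF F j x y
        = (∑ y : V, j x y) - ∑ y ∈ Finset.univ.filter (fun y => piF F y = ω), j x y :=
      fun x hx => hsplit ω x (Finset.mem_filter.mp hx).2
    rw [Finset.sum_congr rfl hcong, Finset.sum_sub_distrib]
    have hz1 : ∑ x ∈ Finset.univ.filter (fun x => piF F x = ω), ∑ y : V, j x y = 0 := by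
      refine Finset.sum_eq_zero fun x hx => ?_
      have hxω := (Finset.mem_filter.mp hx).2
      refine hrow x ?_ ?_
      · intro h; subst h; exact hωc hxω.symm
      · intro h; subst h; exact hωd hxω.symm
    rw [hz1, skew_sum_zero hskew]
    ring
  · have hcong : ∀ x ∈ Finset.univ.filter (fun x => piF F x = piF F c), ∑ y : V, jF F j x y
        = (∑ y : V, j x y) -
          ∑ y ∈ Finset.univ.filter (fun y => piF F y = piF F c), j x y :=
      fun x hx => hsplit (piF F c) x (Finset.mem_filter.mp hx).2
    rw [Finset.sum_congr rfl hcong, Finset.sum_sub_distrib, skew_sum_zero hskew, sub_zero]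
    have hsub : ({c} : Finset V) ⊆ Finset.univ.filter (fun x => piF F x = piF F c) := by
      intro x hx
      rw [Finset.mem_singleton] at hx
      subst hx
      simp
    have hzero : ∀ x ∈ Finset.univ.filter (fun x => piF F x = piF F c),
        x ∉ ({c} : Finset V) → ∑ y : V, j x y = 0 := by
      intro x hxf hxs
      rw [Finset.mem_singleton] at hxs
      have hxω := (Finset.mem_filter.mp hxf).2
      refine hrow x hxs ?_
      intro h; subst h; exact hcdF hxω.symm
    have h := Finset.sum_subset hsub hzero
    rw [Finset.sum_singleton] at h
    rw [← h]
    exact hrowc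

lemma energy_jF_le (hκ : ∀ e, 0 < κ e) (j : V → V → ℝ) :
    energy κ (jF F j) ≤ energy κ j := by
  rw [energy, energy]
  refine mul_le_mul_of_nonneg_left ?_ (by norm_num)
  refine Finset.sum_le_sum fun x _ => Finset.sum_le_sum fun y _ => ?_
  simp only [jF]
  by_cases h : piF F x = piF F y
  · rw [if_pos h]
    have : (0 : ℝ) ^ 2 / κ s(x, y) = 0 := by norm_num
    rw [this]
    exact div_nonneg (sq_nonneg _) (hκ _).le
  · rw [if_neg h]

end ApplyF2

end DetLapAux

open DetLapAux SimpleGraph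

/-- for a finite connected graph `G`, a connected subgraph `G'`,
an edge set `F ⊆ E`, `κ ∈ {1,q}^E` with `κ_f = 1` for `f ∈ E'`,
`det Δ^{G'}_{κ⁺}/det Δ^{G'}_κ ≥ det Δ^G_{κ⁺}/det Δ^G_κ ≥
 det Δ^{G/F}_{κ⁺}/det Δ^{G/F}_κ`. -/
theorem detLap_ratio_monotone {V : Type*} [Fintype V] [DecidableEq V]
    (G : SimpleGraph V) (hG : G.Connected)
    (H : G.Subgraph) (hH : H.Connected)
    (F : Finset (Sym2 V)) (hF : ↑F ⊆ G.edgeSet)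
    (q : ℝ) (hq : 1 ≤ q) (κ : Sym2 V → ℝ) (hκ : ∀ e, κ e = 1 ∨ κ e = q)
    (f : Sym2 V) (hf : f ∈ H.edgeSet) (hκf : κ f = 1)
    (hfF : ∀ x y : V, f = s(x, y) →
      ¬ (SimpleGraph.fromEdgeSet (↑F : Set (Sym2 V))).Reachable x y) :
    detLap G (Function.update κ f q) / detLap G κ ≤
        detLapSub G H (Function.update κ f q) / detLapSub G H κ ∧
      detLapContract G F (Function.update κ f q) / detLapContract G F κ ≤
        detLap G (Function.update κ f q) / detLap G κ := by
  classical
  revert hf hκf hfF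
  induction f using Sym2.inductionOn with | _ c d =>
  intro hf hκf hfF
  haveI : Nonempty V := hG.nonempty
  have hadj : H.Adj c d := Subgraph.mem_edgeSet.mp hf
  have hc : c ∈ H.verts := H.edge_vert hadj
  have hd : d ∈ H.verts := H.edge_vert hadj.symm
  have hcd : c ≠ d := G.ne_of_adj (H.adj_sub hadj)
  have hκpos : ∀ e, 0 < κ e := fun e => by
    rcases hκ e with h | h <;> rw [h] <;> linarith
  haveI : Fintype (fromEdgeSet (↑F : Set (Sym2 V))).ConnectedComponent := Fintype.ofFinite _
  haveI : DecidableEq (fromEdgeSet (↑F : Set (Sym2 V))).ConnectedComponent := Classical.decEq _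
  haveI : Nonempty ↥H.verts := ⟨⟨c, hc⟩⟩
  haveI : Nonempty (fromEdgeSet (↑F : Set (Sym2 V))).ConnectedComponent := ⟨piF F c⟩
  -- the ambient network
  have hcrossG : ∀ x y : V, s(x, y) ∈ EG G → (id x : V) ≠ id y := fun x y h => cross_EG h
  have hconnG : Conn (id : V → V) (EG G) := connE_G hG
  have hNG : 0 < NN (id : V → V) (EG G) κ := NN_pos hcrossG hconnG hκpos
  have hfG : s(c, d) ∈ EG G := mem_EG.mpr (H.edgeSet_subset hf)
  have hcdG : (id c : V) ≠ id d := hcd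
  -- the subgraph network
  have hcrossH : ∀ x y : V, s(x, y) ∈ EH H → piH H c hc x ≠ piH H c hc y :=
    fun x y h => cross_EH h
  have hconnH : Conn (piH H c hc) (EH H) := connE_H hH hc
  have hNH : 0 < NN (piH H c hc) (EH H) κ := NN_pos hcrossH hconnH hκpos
  have hfHE : s(c, d) ∈ EH H := mem_EH.mpr hf
  have hcdH : piH H c hc c ≠ piH H c hc d := by
    rw [piH_mem hc, piH_mem hd]
    intro h
    exact hcd (by simpa using h)
  -- the contracted network
  have hcrossF : ∀ x y : V, s(x, y) ∈ EF G F → piF F x ≠ piF F y := fun x y h => cross_EF h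
  have hconnF : Conn (piF F) (EF G F) := connE_F hG hF
  have hNF : 0 < NN (piF F) (EF G F) κ := NN_pos hcrossF hconnF hκpos
  have hfFE : s(c, d) ∈ EF G F := mem_EF.mpr ⟨H.edgeSet_subset hf, hfF⟩
  have hcdF : piF F c ≠ piF F d := fun h => hfF c d rfl (piF_eq_iff.mp h)
  -- probability comparisons
  have hPGH : NNf (id : V → V) (EG G) κ c d / NN (id : V → V) (EG G) κ
      ≤ NNf (piH H c hc) (EH H) κ c d / NN (piH H c hc) (EH H) κ := by
    have hθ := theta_flow (π := piH H c hc) (E := EH H) (κ := κ) (c := c) (d := d)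
      hcrossH hcdH (ne_of_gt hNH)
    have hflowG := flow_H_to_G hθ hd hcd
    have h1 := energy_ge hcrossG hcdG hκpos hNG hfG hκf hflowG
    have h2 := energy_theta hcrossH hcdH hκpos hNH hfHE hκf
    exact h1.trans_eq h2
  have hPFG : NNf (piF F) (EF G F) κ c d / NN (piF F) (EF G F) κ
      ≤ NNf (id : V → V) (EG G) κ c d / NN (id : V → V) (EG G) κ := by
    have hθ := theta_flow (π := (id : V → V)) (E := EG G) (κ := κ) (c := c) (d := d)
      hcrossG hcdG (ne_of_gt hNG)
    have hflowF := flow_G_to_F hθ hcdF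
    have h1 := energy_ge hcrossF hcdF hκpos hNF hfFE hκf hflowF
    have h2 := energy_jF_le (F := F) hκpos (theta (id : V → V) (EG G) κ c d)
    have h3 := energy_theta hcrossG hcdG hκpos hNG hfG hκf
    exact h1.trans (h2.trans_eq h3)
  -- rewriting the determinants
  have hdetG : ∀ κ' : Sym2 V → ℝ,
      detLap G κ' = (Fintype.card V : ℝ) * NN (id : V → V) (EG G) κ' := by
    intro κ'
    rw [detLap, treesG_eq]
    rfl
  have hdetH : ∀ κ' : Sym2 V → ℝ,
      detLapSub G H κ' = (Nat.card H.verts : ℝ) * NN (piH H c hc) (EH H) κ' := by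
    intro κ'
    rw [detLapSub, treesH_eq hc]
    rfl
  have hdetF : ∀ κ' : Sym2 V → ℝ,
      detLapContract G F κ'
        = (Nat.card (fromEdgeSet (↑F : Set (Sym2 V))).ConnectedComponent : ℝ) *
            NN (piF F) (EF G F) κ' := by
    intro κ'
    rw [detLapContract, treesF_eq hF]
    rfl
  have ha : (0 : ℝ) < (Fintype.card V : ℝ) := by exact_mod_cast Fintype.card_pos
  have hb : (0 : ℝ) < (Nat.card H.verts : ℝ) := by
    have : 0 < Nat.card H.verts := Nat.card_pos
    exact_mod_cast this
  have hcc : (0 : ℝ) <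
      (Nat.card (fromEdgeSet (↑F : Set (Sym2 V))).ConnectedComponent : ℝ) := by
    have : 0 < Nat.card (fromEdgeSet (↑F : Set (Sym2 V))).ConnectedComponent := Nat.card_pos
    exact_mod_cast this
  constructor
  · rw [hdetG, hdetG, hdetH, hdetH, NN_update rfl hκf, NN_update rfl hκf]
    exact ratio_helper ha hb hNG hNH hq hPGH
  · rw [hdetG, hdetG, hdetF, hdetF, NN_update rfl hκf, NN_update rfl hκf]
    exact ratio_helper hcc ha hNF hNG hq hPFG
end

section
/- Let G be a finite connected planar graph with dual G*, q ≥ 1, p ∈ (0,1), and let P^{G,p}(κ) ∝ p^{h(κ)}(1−p)^{s(κ)}/sqrt(Σ_{t∈ST(G)} q^{h(κ,t)}). If κ is distributed according to P^{G,p}, then the dual configuration κ* (with κ*_{e*} = 1+q−κ_e) is distributed according to P^{G*,p*} where p*/(1−p*) = (1−p)√q/p. -/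
open scoped Classical

/-- Number of edges of `E` on which the configuration takes the value `q`
(encoded as `true`). -/
noncomputable def hcount {E : Type*} [Fintype E] (σ : E → Bool) : ℕ :=
  (Finset.univ.filter (fun e => σ e = true)).card

/-- Number of edges on which the configuration takes the value `1`. -/
noncomputable def scount {E : Type*} [Fintype E] (σ : E → Bool) : ℕ :=
  (Finset.univ.filter (fun e => σ e = false)).card

/-- Number of `q`-edges of the configuration inside a set `t` of edges. -/
noncomputable def hcountIn {E : Type*} (t : Finset E) (σ : E → Bool) : ℕ :=
  (t.filter (fun e => σ e = true)).card

/-- Unnormalised weight `p^{h(κ)} (1−p)^{s(κ)} / √(∑_{t ∈ ST} q^{h(κ,t)})`. -/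
noncomputable def rcWeight {E : Type*} [Fintype E]
    (ST : Finset (Finset E)) (p q : ℝ) (σ : E → Bool) : ℝ :=
  p ^ hcount σ * (1 - p) ^ scount σ /
    Real.sqrt (∑ t ∈ ST, q ^ hcountIn t σ)

/-- Probability of a configuration under `P^{G,p}`. -/
noncomputable def rcProb {E : Type*} [Fintype E]
    (ST : Finset (Finset E)) (p q : ℝ) (σ : E → Bool) : ℝ :=
  rcWeight ST p q σ / ∑ τ : E → Bool, rcWeight ST p q τ

/-!
Flipping the configuration along the edge duality `d` exchanges `h` and `s`, and `t ↦ t^d` is a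
bijection from the spanning trees of `G` onto those of `G*` with
`h(κ*, t^d) = s(κ, E ∖ t) = s(κ) - m + h(κ, t)`. So the spanning-tree sum of `κ*` is
`q^{s(κ) - m}` times that of `κ`, and the `P^{G*,p*}`-weight of `κ*` is
`√q^m / (p + (1 - p)√q)^{|E|}` times the `P^{G,p}`-weight of `κ`. This constant does not depend
on `κ`, so it cancels on normalising.
-/

lemma sqrt_pow_eq_pow_sqrt {x : ℝ} (hx : 0 ≤ x) (k : ℕ) : √(x ^ k) = √x ^ k := by
  rw [← Real.sqrt_sq (pow_nonneg (Real.sqrt_nonneg x) k), ← pow_mul, mul_comm, pow_mul,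
    Real.sq_sqrt hx]

noncomputable def scountIn {E : Type*} (t : Finset E) (σ : E → Bool) : ℕ :=
  (t.filter (fun e => σ e = false)).card

section Counting

variable {E F : Type*}

lemma scountIn_add_hcountIn (t : Finset E) (σ : E → Bool) :
    scountIn t σ + hcountIn t σ = t.card := by
  unfold scountIn hcountIn
  simpa only [Bool.not_eq_false] using Finset.card_filter_add_card_filter_not (s := t)
    (p := fun e => σ e = false)

lemma scount_add_hcount [Fintype E] (σ : E → Bool) :
    scount σ + hcount σ = Fintype.card E :=
  scountIn_add_hcountIn Finset.univ σ

lemma scountIn_add_scountIn_compl [Fintype E] [DecidableEq E] (t : Finset E) (σ : E → Bool) :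
    scountIn t σ + scountIn tᶜ σ = scount σ := by
  rw [scountIn, scountIn, scount, ← Finset.card_union_of_disjoint
    (Finset.disjoint_filter_filter disjoint_compl_right), ← Finset.filter_union,
    Finset.union_compl]

/-- The dual configuration `κ*`, with `κ*_{d e} = 1 + q - κ_e`. -/
def dualConfig (d : E ≃ F) : (E → Bool) ≃ (F → Bool) where
  toFun σ e' := !σ (d.symm e')
  invFun σ' e := !σ' (d e)
  left_inv σ := by ext; simp
  right_inv σ' := by ext; simp

lemma hcountIn_image_dualConfig [DecidableEq F] (d : E ≃ F) (t : Finset E) (σ : E → Bool) :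
    hcountIn (t.image d) (dualConfig d σ) = scountIn t σ := by
  rw [hcountIn, scountIn, Finset.filter_image, Finset.card_image_of_injective _ d.injective]
  simp [dualConfig]

lemma hcount_dualConfig [Fintype E] [Fintype F] (d : E ≃ F) (σ : E → Bool) :
    hcount (dualConfig d σ) = scount σ := by
  unfold hcount scount
  exact (Finset.card_equiv d (by simp [dualConfig])).symm

lemma scount_dualConfig [Fintype E] [Fintype F] (d : E ≃ F) (σ : E → Bool) :
    scount (dualConfig d σ) = hcount σ := by
  unfold scount hcount
  exact (Finset.card_equiv d (by simp [dualConfig])).symm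

end Counting

section Duality

variable {E F : Type*} [Fintype E] [DecidableEq E] [DecidableEq F]

/-- The dual spanning tree `t^d = (E ∖ t)*`. -/
def dualTree (d : E ≃ F) (t : Finset E) : Finset F :=
  tᶜ.image d

lemma dualTree_injective (d : E ≃ F) : Function.Injective (dualTree d) :=
  (Finset.image_injective d.injective).comp compl_injective

lemma hcountIn_dualTree_add_card (d : E ≃ F) (t : Finset E) (σ : E → Bool) :
    hcountIn (dualTree d t) (dualConfig d σ) + t.card = scount σ + hcountIn t σ := by
  rw [dualTree, hcountIn_image_dualConfig, ← scountIn_add_hcountIn t σ,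
    ← scountIn_add_scountIn_compl t σ]
  ring

lemma pow_mul_sum_dualTrees (d : E ≃ F) (q : ℝ) {ST : Finset (Finset E)} {m : ℕ}
    (hm : ∀ t ∈ ST, t.card = m) (σ : E → Bool) :
    q ^ m * ∑ t' ∈ ST.image (dualTree d), q ^ hcountIn t' (dualConfig d σ) =
      q ^ scount σ * ∑ t ∈ ST, q ^ hcountIn t σ := by
  rw [Finset.sum_image fun t₁ _ t₂ _ h => dualTree_injective d h, Finset.mul_sum,
    Finset.mul_sum]
  refine Finset.sum_congr rfl fun t ht => ?_
  rw [← pow_add, ← pow_add, ← hm t ht, add_comm, hcountIn_dualTree_add_card]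

lemma sqrt_sum_dualTrees (d : E ≃ F) {q : ℝ} (hq : 0 ≤ q) {ST : Finset (Finset E)} {m : ℕ}
    (hm : ∀ t ∈ ST, t.card = m) (σ : E → Bool) :
    √q ^ m * √(∑ t' ∈ ST.image (dualTree d), q ^ hcountIn t' (dualConfig d σ)) =
      √q ^ scount σ * √(∑ t ∈ ST, q ^ hcountIn t σ) := by
  rw [← sqrt_pow_eq_pow_sqrt hq, ← sqrt_pow_eq_pow_sqrt hq, ← Real.sqrt_mul (pow_nonneg hq _),
    ← Real.sqrt_mul (pow_nonneg hq _), pow_mul_sum_dualTrees d q hm]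

end Duality

/-- The dual parameter `p*`, determined by `p* / (1 - p*) = (1 - p) √q / p`. -/
noncomputable def dualParam (p q : ℝ) : ℝ :=
  (1 - p) * √q / (p + (1 - p) * √q)

lemma one_sub_dualParam {p q : ℝ} (hD : p + (1 - p) * √q ≠ 0) :
    1 - dualParam p q = p / (p + (1 - p) * √q) := by
  rw [dualParam, eq_div_iff hD, sub_mul, div_mul_cancel₀ _ hD]
  ring

lemma rcWeight_dualConfig {E F : Type*} [Fintype E] [DecidableEq E] [Fintype F] [DecidableEq F]
    (d : E ≃ F) {p q : ℝ} (hq : 0 < q) (hD : p + (1 - p) * √q ≠ 0)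
    {ST : Finset (Finset E)} {m : ℕ} (hm : ∀ t ∈ ST, t.card = m) (σ : E → Bool) :
    rcWeight (ST.image (dualTree d)) (dualParam p q) q (dualConfig d σ) =
      √q ^ m / (p + (1 - p) * √q) ^ Fintype.card E * rcWeight ST p q σ := by
  have hsq : √q ≠ 0 := (Real.sqrt_pos.2 hq).ne'
  have hS := sqrt_sum_dualTrees d hq.le hm σ
  rw [mul_comm, ← eq_div_iff (pow_ne_zero _ hsq)] at hS
  rw [rcWeight, rcWeight, hcount_dualConfig, scount_dualConfig, one_sub_dualParam hD, hS,
    dualParam, ← scount_add_hcount σ]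
  generalize p + (1 - p) * √q = D at hD ⊢
  rw [div_pow, div_pow, mul_pow, pow_add]
  field_simp

lemma rcProb_eq_of_rcWeight_eq_const_mul {E F : Type*} [Fintype E] [Fintype F]
    {ST : Finset (Finset E)} {ST' : Finset (Finset F)} {p q p' q' c : ℝ}
    (e : (E → Bool) ≃ (F → Bool)) (hc : c ≠ 0)
    (he : ∀ τ, rcWeight ST' p' q' (e τ) = c * rcWeight ST p q τ) (σ : E → Bool) :
    rcProb ST' p' q' (e σ) = rcProb ST p q σ := by
  rw [rcProb, rcProb, he, ← e.sum_comp, Finset.sum_congr rfl fun τ _ => he τ, ← Finset.mul_sum,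
    mul_div_mul_left _ _ hc]

theorem randomConductance_duality_general {E Estar : Type*} [Fintype E] [DecidableEq E]
    [Fintype Estar] [DecidableEq Estar]
    (d : E ≃ Estar) (q p : ℝ) (hq : 1 ≤ q) (hp : p ∈ Set.Ioo (0 : ℝ) 1)
    (ST : Finset (Finset E))
    (m : ℕ) (hm : ∀ t ∈ ST, t.card = m)
    (σ : E → Bool) :
    rcProb (ST.image (fun t => tᶜ.image d))
        ((1 - p) * Real.sqrt q / (p + (1 - p) * Real.sqrt q)) q
        (fun e' => ! σ (d.symm e')) =
      rcProb ST p q σ := by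
  obtain ⟨hp0, hp1⟩ := hp
  have hq0 : 0 < q := by linarith
  have hD : 0 < p + (1 - p) * √q := add_pos hp0 (mul_pos (by linarith) (Real.sqrt_pos.2 hq0))
  have hc : √q ^ m / (p + (1 - p) * √q) ^ Fintype.card E ≠ 0 :=
    div_ne_zero (pow_ne_zero _ (Real.sqrt_pos.2 hq0).ne') (pow_ne_zero _ hD.ne')
  exact rcProb_eq_of_rcWeight_eq_const_mul (dualConfig d) hc
    (rcWeight_dualConfig d hq0 hD.ne' hm) σ

/-- duality of the random conductance model on a planar graph.
If `κ` is distributed according to `P^{G,p}`, then the dual configuration `κ*`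
(with `κ*_{e*} = 1+q−κ_e`, i.e. the Boolean encoding is flipped along the edge
duality `d`) is distributed according to `P^{G*,p*}` where
`p*/(1−p*) = (1−p)√q/p`, i.e. `p* = (1−p)√q/(p + (1−p)√q)`.  Spanning trees of
the dual graph are the duals `t^d = (E∖t)*` of the spanning trees of `G`, all
spanning trees having `m` edges. -/
theorem randomConductance_duality {E Estar : Type*} [Fintype E] [DecidableEq E]
    [Fintype Estar] [DecidableEq Estar]
    (d : E ≃ Estar) (q p : ℝ) (hq : 1 ≤ q) (hp : p ∈ Set.Ioo (0 : ℝ) 1)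
    (ST : Finset (Finset E)) (hST : ST.Nonempty)
    (m : ℕ) (hm : ∀ t ∈ ST, t.card = m)
    (σ : E → Bool) :
    rcProb (ST.image (fun t => tᶜ.image d))
        ((1 - p) * Real.sqrt q / (p + (1 - p) * Real.sqrt q)) q
        (fun e' => ! σ (d.symm e')) =
      rcProb ST p q σ :=
  randomConductance_duality_general d q p hq hp ST m hm σ
end
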